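/- arXiv:2205.04805 — 2 statements merged into one kernel-verified Lean document; each statement's English description precedes it below -/
import Mathlib

section
/- Let σ be a finite signature and let A and B be valued σ-structures. The pair (A,B) is a PVCSP template — i.e., for every non-negative finite-valued σ-structure I and every rational threshold τ it is not the case that both Opt(I,A) ≤ τ and Opt(I,B) > τ — if and only if there exists a fractional homomorphism from A to B. -/
open scoped BigOperators Classical

namespace PVCSP

/-! ## Valued structures -/

/-- The value `Val(I,A,h)` of an assignment `h : I → A`, where the input structure is
given by weights `vI` and the template structure by costs `vA` (in `ℚ ∪ {∞}`). -/
def Val {σ : Type} [Fintype σ] (ar : σ → ℕ) {I A : Type} [Fintype I]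
    (vI : ∀ R : σ, (Fin (ar R) → I) → ℚ)
    (vA : ∀ R : σ, (Fin (ar R) → A) → WithTop ℚ) (h : I → A) : WithTop ℚ :=
  ∑ R : σ, ∑ v : Fin (ar R) → I, (vI R v : WithTop ℚ) * vA R (fun i => h (v i))

/-- `Opt(I,A)`: the minimum value over all assignments. -/
def Opt {σ : Type} [Fintype σ] (ar : σ → ℕ) {I A : Type} [Fintype I] [DecidableEq I]
    [Fintype A]
    (vI : ∀ R : σ, (Fin (ar R) → I) → ℚ)
    (vA : ∀ R : σ, (Fin (ar R) → A) → WithTop ℚ) : WithTop ℚ :=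
  (Finset.univ : Finset (I → A)).inf fun h => Val ar vI vA h

/-- Non-negativity of an input (finite-valued) structure. -/
def NNeg {σ : Type} (ar : σ → ℕ) {I : Type}
    (vI : ∀ R : σ, (Fin (ar R) → I) → ℚ) : Prop :=
  ∀ R v, 0 ≤ vI R v

/-- A fractional homomorphism from `A` to `B`. -/
def IsFracHom {σ : Type} [Fintype σ] (ar : σ → ℕ) {A B : Type}
    [Fintype A] [DecidableEq A] [Fintype B]
    (vA : ∀ R : σ, (Fin (ar R) → A) → WithTop ℚ)
    (vB : ∀ R : σ, (Fin (ar R) → B) → WithTop ℚ)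
    (μ : (A → B) → ℚ) : Prop :=
  (∀ f, 0 ≤ μ f) ∧ (∑ f : A → B, μ f = 1) ∧
    ∀ (R : σ) (a : Fin (ar R) → A),
      ∑ f : A → B, (μ f : WithTop ℚ) * vB R (fun i => f (a i)) ≤ vA R a

/-- A symmetric `n`-ary operation. -/
def IsSymmetricOp {A B : Type} {n : ℕ} (f : (Fin n → A) → B) : Prop :=
  ∀ (ρ : Equiv.Perm (Fin n)) (x : Fin n → A), f (fun i => x (ρ i)) = f x

/-- An `n`-ary fractional polymorphism of the pair `(A,B)`. -/
def IsFracPoly {σ : Type} [Fintype σ] (ar : σ → ℕ) {A B : Type}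
    [Fintype A] [DecidableEq A] [Fintype B]
    (vA : ∀ R : σ, (Fin (ar R) → A) → WithTop ℚ)
    (vB : ∀ R : σ, (Fin (ar R) → B) → WithTop ℚ)
    (n : ℕ) (ω : ((Fin n → A) → B) → ℚ) : Prop :=
  (∀ f, 0 ≤ ω f) ∧ (∑ f : (Fin n → A) → B, ω f = 1) ∧
    ∀ (R : σ) (a : Fin n → (Fin (ar R) → A)),
      ∑ f : (Fin n → A) → B, (ω f : WithTop ℚ) * vB R (fun j => f (fun i => a i j))
        ≤ ((((n : ℚ)⁻¹ : ℚ)) : WithTop ℚ) * ∑ i : Fin n, vA R (a i)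

/-- A dual fractional homomorphism from `I` to `J` (both non-negative finite-valued). -/
def IsDualFracHom {σ : Type} [Fintype σ] (ar : σ → ℕ) {I J : Type}
    [Fintype I] [DecidableEq I] [Fintype J] [DecidableEq J]
    (vI : ∀ R : σ, (Fin (ar R) → I) → ℚ)
    (vJ : ∀ R : σ, (Fin (ar R) → J) → ℚ)
    (η : (I → J) → ℚ) : Prop :=
  (∀ f, 0 ≤ η f) ∧ (∑ f : I → J, η f = 1) ∧
    ∀ (R : σ) (u : Fin (ar R) → J),
      ∑ f : I → J, η f *
          ∑ v ∈ Finset.univ.filter (fun v : Fin (ar R) → I => (fun i => f (v i)) = u), vI R v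
        ≤ vJ R u

/-! ## Linear programming relaxations -/

/-- Canonical embedding of `ℚ ∪ {∞}` into the extended reals. -/
noncomputable def toE (x : WithTop ℚ) : EReal :=
  x.recTopCoe ⊤ (fun q => ((q : ℝ) : EReal))

/-- The objective value of an LP solution `pc`. -/
def objVal {σ : Type} [Fintype σ] (ar : σ → ℕ) {I A : Type} [Fintype I] [Fintype A]
    (vI : ∀ R : σ, (Fin (ar R) → I) → ℚ)
    (vA : ∀ R : σ, (Fin (ar R) → A) → WithTop ℚ)
    (pc : ∀ R : σ, (Fin (ar R) → I) → (Fin (ar R) → A) → ℚ) : WithTop ℚ :=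
  ∑ R : σ, ∑ v : Fin (ar R) → I, ∑ a : Fin (ar R) → A,
    (pc R v a : WithTop ℚ) * ((vI R v : WithTop ℚ) * vA R a)

/-- Feasibility for the basic linear programming relaxation `BLP(I,A)`. -/
def BLPFeas {σ : Type} [Fintype σ] (ar : σ → ℕ) {I A : Type} [Fintype I] [Fintype A]
    [DecidableEq A]
    (vI : ∀ R : σ, (Fin (ar R) → I) → ℚ)
    (vA : ∀ R : σ, (Fin (ar R) → A) → WithTop ℚ)
    (pv : I → A → ℚ)
    (pc : ∀ R : σ, (Fin (ar R) → I) → (Fin (ar R) → A) → ℚ) : Prop :=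
  (∀ R v a, 0 < vI R v → 0 ≤ pc R v a) ∧
  (∀ u : I, ∑ a : A, pv u a = 1) ∧
  (∀ R v, 0 < vI R v → ∀ (i : Fin (ar R)) (a : A),
      pv (v i) a = ∑ t ∈ Finset.univ.filter (fun t : Fin (ar R) → A => t i = a), pc R v t) ∧
  (∀ R v, 0 < vI R v → ∀ t : Fin (ar R) → A, vA R t = ⊤ → pc R v t = 0)

/-- Feasibility for the Sherali–Adams relaxation `SA¹(I,A)`. -/
def SA1Feas {σ : Type} [Fintype σ] (ar : σ → ℕ) {I A : Type} [Fintype I] [Fintype A]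
    [DecidableEq A]
    (vI : ∀ R : σ, (Fin (ar R) → I) → ℚ)
    (vA : ∀ R : σ, (Fin (ar R) → A) → WithTop ℚ)
    (pv : I → A → ℚ)
    (pc : ∀ R : σ, (Fin (ar R) → I) → (Fin (ar R) → A) → ℚ) : Prop :=
  BLPFeas ar vI vA pv pc ∧
  (∀ R v, 0 < vI R v → ∀ t : Fin (ar R) → A,
      (∃ i j, v i = v j ∧ t i ≠ t j) → pc R v t = 0)

/-- The optimal value `Opt^BLP(I,A)` (equal to `⊤` if the program is infeasible). -/
noncomputable def OptBLP {σ : Type} [Fintype σ] (ar : σ → ℕ) {I A : Type}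
    [Fintype I] [Fintype A] [DecidableEq A]
    (vI : ∀ R : σ, (Fin (ar R) → I) → ℚ)
    (vA : ∀ R : σ, (Fin (ar R) → A) → WithTop ℚ) : EReal :=
  sInf { x : EReal | ∃ pv pc, BLPFeas ar vI vA pv pc ∧ x = toE (objVal ar vI vA pc) }

/-- The optimal value `Opt^{SA¹}(I,A)` (equal to `⊤` if the program is infeasible). -/
noncomputable def OptSA1 {σ : Type} [Fintype σ] (ar : σ → ℕ) {I A : Type}
    [Fintype I] [Fintype A] [DecidableEq A]
    (vI : ∀ R : σ, (Fin (ar R) → I) → ℚ)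
    (vA : ∀ R : σ, (Fin (ar R) → A) → WithTop ℚ) : EReal :=
  sInf { x : EReal | ∃ pv pc, SA1Feas ar vI vA pv pc ∧ x = toE (objVal ar vI vA pc) }

/-- The structure `LP^m(A)` on the universe of `m`-element multisets over `A`. -/
def lpPow {σ : Type} [Fintype σ] (ar : σ → ℕ) {A : Type} [Fintype A] [DecidableEq A]
    (m : ℕ) (vA : ∀ R : σ, (Fin (ar R) → A) → WithTop ℚ) :
    ∀ R : σ, (Fin (ar R) → Sym A m) → WithTop ℚ :=
  fun R s =>
    ((((m : ℚ)⁻¹ : ℚ)) : WithTop ℚ) *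
      ((Finset.univ.filter (fun t : Fin (ar R) → (Fin m → A) =>
          ∀ j, Multiset.map (t j) Finset.univ.val = Sym.toMultiset (s j))).inf
        (fun t => ∑ i : Fin m, vA R (fun j => t j i)))

/-! ## The graph of an input structure and iterated degrees -/

/-- Potential constraint vertices of the graph `G(I)`. -/
abbrev CVert (σ : Type) (ar : σ → ℕ) (I : Type) := Σ R : σ, (Fin (ar R) → I)

/-- The label of the edge between variable `u` and constraint `c`: the set of
coordinates of `c` at which `u` occurs. -/
def edgeLab {σ : Type} {ar : σ → ℕ} {I : Type} [DecidableEq I]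
    (u : I) (c : CVert σ ar I) : Finset ℕ :=
  (Finset.univ.filter (fun i : Fin (ar c.1) => c.2 i = u)).image Fin.val

/-- The type of `k`-th iterated degrees over signature `σ`. -/
def Deg (σ : Type) : ℕ → Type
  | 0 => Option (σ × ℚ)
  | k+1 => Multiset (Finset ℕ × Deg σ k)

/-- The `k`-th iterated degree of a vertex of `G(I)` (a variable or a constraint). -/
def degV {σ : Type} [Fintype σ] (ar : σ → ℕ) {I : Type} [Fintype I] [DecidableEq I]
    (vI : ∀ R : σ, (Fin (ar R) → I) → ℚ) :
    (k : ℕ) → (I ⊕ CVert σ ar I) → Deg σ k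
  | 0, Sum.inl _ => (none : Option (σ × ℚ))
  | 0, Sum.inr c => some (c.1, vI c.1 c.2)
  | k+1, Sum.inl u =>
      ((Finset.univ.filter
          (fun c : CVert σ ar I => 0 < vI c.1 c.2 ∧ ∃ i, c.2 i = u)).val).map
        (fun c => (edgeLab u c, degV ar vI k (Sum.inr c)))
  | k+1, Sum.inr c =>
      ((Finset.univ.filter (fun u : I => ∃ i, c.2 i = u)).val).map
        (fun u => (edgeLab u c, degV ar vI k (Sum.inl u)))

/-- The full iterated degree type. -/
def IterDeg (σ : Type) : Type := ∀ k : ℕ, Deg σ k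

/-- The iterated degree `δ(x)` of a vertex. -/
def itdeg {σ : Type} [Fintype σ] (ar : σ → ℕ) {I : Type} [Fintype I] [DecidableEq I]
    (vI : ∀ R : σ, (Fin (ar R) → I) → ℚ) (x : I ⊕ CVert σ ar I) : IterDeg σ :=
  fun k => degV ar vI k x

/-- The iterated degree sequence `δ(I)` (a multiset over all vertices of `G(I)`). -/
def degSeq {σ : Type} [Fintype σ] (ar : σ → ℕ) {I : Type} [Fintype I] [DecidableEq I]
    (vI : ∀ R : σ, (Fin (ar R) → I) → ℚ) : Multiset (IterDeg σ) :=
  (Finset.univ.val.map (fun u : I => itdeg ar vI (Sum.inl u))) +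
  ((Finset.univ.filter (fun c : CVert σ ar I => 0 < vI c.1 c.2)).val.map
      (fun c => itdeg ar vI (Sum.inr c)))

/-- Adjacency in the graph `G(I)`. -/
def Adj {σ : Type} (ar : σ → ℕ) {I : Type}
    (vI : ∀ R : σ, (Fin (ar R) → I) → ℚ) :
    (I ⊕ CVert σ ar I) → (I ⊕ CVert σ ar I) → Prop
  | Sum.inl u, Sum.inr c => 0 < vI c.1 c.2 ∧ ∃ i, c.2 i = u
  | Sum.inr c, Sum.inl u => 0 < vI c.1 c.2 ∧ ∃ i, c.2 i = u
  | _, _ => False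

/-- Actual vertices of `G(I)`: all variables and the positive-weight constraints. -/
def IsVert {σ : Type} (ar : σ → ℕ) {I : Type}
    (vI : ∀ R : σ, (Fin (ar R) → I) → ℚ) : (I ⊕ CVert σ ar I) → Prop
  | Sum.inl _ => True
  | Sum.inr c => 0 < vI c.1 c.2

/-- Connectedness of the input structure `I` (i.e. of its graph `G(I)`). -/
def Conn {σ : Type} (ar : σ → ℕ) {I : Type}
    (vI : ∀ R : σ, (Fin (ar R) → I) → ℚ) : Prop :=
  Nonempty I ∧ ∀ x y, IsVert ar vI x → IsVert ar vI y →
    Relation.ReflTransGen (Adj ar vI) x y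

/-- Weak congruence: `|J| ⬝ δ(I) = |I| ⬝ δ(J)`. -/
def WeakCongr {σ : Type} [Fintype σ] (ar : σ → ℕ) {I J : Type}
    [Fintype I] [DecidableEq I] [Fintype J] [DecidableEq J]
    (vI : ∀ R : σ, (Fin (ar R) → I) → ℚ)
    (vJ : ∀ R : σ, (Fin (ar R) → J) → ℚ) : Prop :=
  (Fintype.card J) • degSeq ar vI = (Fintype.card I) • degSeq ar vJ

/-- Membership of a variable in the connected component of the variable `x₀`. -/
def InComp {σ : Type} (ar : σ → ℕ) {I : Type}
    (vI : ∀ R : σ, (Fin (ar R) → I) → ℚ) (x₀ u : I) : Prop :=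
  Relation.ReflTransGen (Adj ar vI) (Sum.inl x₀) (Sum.inl u)


/-!
If `μ` is a fractional homomorphism and `h : I → A` is any assignment, the average of
`Val(I, B, f ∘ h)` over `f ∼ μ` is at most `Val(I, A, h)`, so `Opt(I, B) ≤ Opt(I, A)` for every
instance, which is exactly the template property.

Conversely, a fractional homomorphism is a rational solution of a finite linear program with one
variable `μ f` for each `f` mapping finite-cost tuples to finite-cost tuples. If the program is
infeasible, Farkas' lemma over `ℚ` (by Fourier–Motzkin elimination) yields non-negative weights
`z` on the tuples of `A` that every such `f` violates on average. Slightly perturbed, `z` becomes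
an instance on the universe `A` for which the identity assignment into `A` is strictly cheaper than
every assignment into `B`.
-/

lemma sum_dite_eq_sum_subtype {α M : Type*} [Fintype α] [AddCommMonoid M] (p : α → Prop)
    [DecidablePred p] (g : Subtype p → M) :
    ∑ a, (if h : p a then g ⟨a, h⟩ else 0) = ∑ a : Subtype p, g a := by
  rw [← Fintype.sum_subtype_add_sum_subtype p]
  simp only [Subtype.prop, dif_pos, Subtype.coe_eta]
  rw [Fintype.sum_eq_zero (fun a : {a // ¬p a} => if h : p a then g ⟨a, h⟩ else 0)
    fun a => dif_neg a.2, add_zero]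

lemma exists_pos_forall_add_mul_pos {F : Type*} [Finite F] (δ s : F → ℚ) (hδ : ∀ f, 0 < δ f) :
    ∃ ε > 0, ∀ f, 0 < δ f + ε * s f := by
  have : ∀ᶠ ε in nhdsWithin (0 : ℚ) (Set.Ioi 0), 0 < ε ∧ ∀ f, 0 < δ f + ε * s f := by
    refine eventually_mem_nhdsWithin.and (Filter.eventually_all.2 fun f => ?_)
    have hc : Continuous fun ε : ℚ => δ f + ε * s f := by fun_prop
    exact ((hc.tendsto' 0 (δ f) (by simp)).mono_left nhdsWithin_le_nhds).eventually
      (lt_mem_nhds (hδ f))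
  exact this.exists

section WeightedSums

variable {ι : Type*}

lemma coe_mul_add (c : ℚ) (x y : WithTop ℚ) : (c : WithTop ℚ) * (x + y) = c * x + c * y := by
  rcases eq_or_ne c 0 with rfl | hc
  · simp
  induction x with
  | top => simp [WithTop.mul_top (WithTop.coe_ne_zero.2 hc)]
  | coe x =>
    induction y with
    | top => simp [WithTop.mul_top (WithTop.coe_ne_zero.2 hc)]
    | coe y => norm_cast; ring

lemma coe_mul_sum (s : Finset ι) (c : ℚ) (x : ι → WithTop ℚ) :
    (c : WithTop ℚ) * ∑ i ∈ s, x i = ∑ i ∈ s, c * x i :=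
  map_sum ({ toFun := ((c : WithTop ℚ) * ·), map_zero' := mul_zero _, map_add' := coe_mul_add c } :
    WithTop ℚ →+ WithTop ℚ) x s

lemma coe_mul_le_coe_mul {c : ℚ} (hc : 0 ≤ c) {x y : WithTop ℚ} (h : x ≤ y) :
    (c : WithTop ℚ) * x ≤ c * y := by
  rcases hc.eq_or_lt with rfl | hc
  · simp
  induction y with
  | top => simp [WithTop.mul_top (WithTop.coe_ne_zero.2 hc.ne')]
  | coe y =>
    lift x to ℚ using ne_top_of_le_ne_top WithTop.coe_ne_top h
    norm_cast at h ⊢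
    exact mul_le_mul_of_nonneg_left h hc.le

lemma sum_coe_mul_eq_top_iff (s : Finset ι) (c : ι → ℚ) (x : ι → WithTop ℚ) :
    ∑ i ∈ s, (c i : WithTop ℚ) * x i = ⊤ ↔ ∃ i ∈ s, c i ≠ 0 ∧ x i = ⊤ := by
  simp [WithTop.mul_eq_top_iff]

lemma sum_coe_mul_eq_coe (s : Finset ι) (c : ι → ℚ) (x : ι → WithTop ℚ)
    (h : ∀ i ∈ s, c i ≠ 0 → x i ≠ ⊤) :
    ∑ i ∈ s, (c i : WithTop ℚ) * x i = ↑(∑ i ∈ s, c i * (x i).untopD 0) := by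
  push_cast
  refine Finset.sum_congr rfl fun i hi => ?_
  rcases eq_or_ne (c i) 0 with hc | hc
  · simp [hc]
  · lift x i to ℚ using h i hi hc with q
    simp

lemma sum_coe_mul_const [Fintype ι] {μ : ι → ℚ} (hμ : ∑ i, μ i = 1) (t : WithTop ℚ) :
    ∑ i, (μ i : WithTop ℚ) * t = t := by
  induction t with
  | top =>
    obtain ⟨i, -, hi⟩ := Finset.exists_ne_zero_of_sum_ne_zero (hμ.trans_ne one_ne_zero)
    exact (sum_coe_mul_eq_top_iff _ _ _).2 ⟨i, Finset.mem_univ _, hi, rfl⟩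
  | coe q => norm_cast; rw [← Finset.sum_mul, hμ, one_mul]

lemma exists_le_sum_coe_mul [Fintype ι] {μ : ι → ℚ} (hμ0 : ∀ i, 0 ≤ μ i) (hμ : ∑ i, μ i = 1)
    (x : ι → WithTop ℚ) : ∃ i, x i ≤ ∑ i, (μ i : WithTop ℚ) * x i := by
  obtain ⟨i₀, hi₀, hmin⟩ := (Finset.univ.filter (μ · ≠ 0)).exists_min_image x <| by
    obtain ⟨i, -, hi⟩ := Finset.exists_ne_zero_of_sum_ne_zero (hμ.trans_ne one_ne_zero)
    exact ⟨i, by simpa using hi⟩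
  refine ⟨i₀, ?_⟩
  calc x i₀ = ∑ i, (μ i : WithTop ℚ) * x i₀ := (sum_coe_mul_const hμ _).symm
    _ ≤ ∑ i, (μ i : WithTop ℚ) * x i := Finset.sum_le_sum fun i _ => by
      rcases eq_or_ne (μ i) 0 with hi | hi
      · simp [hi]
      · exact coe_mul_le_coe_mul (hμ0 i) (hmin i (by simpa using hi))

end WeightedSums

lemma forall_not_le_coe_and_coe_lt_iff {x y : WithTop ℚ} :
    (∀ τ : ℚ, ¬(x ≤ τ ∧ (τ : WithTop ℚ) < y)) ↔ y ≤ x := by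
  refine ⟨fun h => ?_, fun h τ hτ => (hτ.2.trans_le (h.trans hτ.1)).false⟩
  by_contra hxy
  rw [not_le] at hxy
  lift x to ℚ using hxy.ne_top
  exact h x ⟨le_rfl, hxy⟩

lemma exists_between_of_forall_le {P N α : Type*} [Finite P] [Finite N] [LinearOrder α]
    [Nonempty α] (f : P → α) (g : N → α) (h : ∀ p q, g q ≤ f p) :
    ∃ t, (∀ q, g q ≤ t) ∧ ∀ p, t ≤ f p := by
  rcases isEmpty_or_nonempty N with hN | hN
  · rcases isEmpty_or_nonempty P with hP | hP
    · exact ⟨Classical.arbitrary α, isEmptyElim, isEmptyElim⟩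
    · obtain ⟨p₀, hp₀⟩ := Finite.exists_min f
      exact ⟨f p₀, isEmptyElim, hp₀⟩
  · obtain ⟨q₀, hq₀⟩ := Finite.exists_max g
    exact ⟨g q₀, hq₀, fun p => h p q₀⟩

section Farkas

open Matrix

variable {𝕜 : Type*} [Field 𝕜] [LinearOrder 𝕜]

/-- Fourier–Motzkin elimination of the column `a`: each row of `fmComb a` is a non-negative
combination of at most two rows in which the coefficients of `a` cancel. -/
def fmComb {ι : Type*} [DecidableEq ι] (a : ι → 𝕜) :
    Matrix ({i // a i = 0} ⊕ {i // 0 < a i} × {i // a i < 0}) ι 𝕜 :=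
  Matrix.of <| Sum.elim (fun z => Pi.single z.1 1)
    fun pq => Pi.single pq.1.1 (-a pq.2) + Pi.single pq.2.1 (a pq.1)

section fmComb

variable {ι : Type*} [DecidableEq ι] [Fintype ι] (a : ι → 𝕜)

@[simp] lemma fmComb_mulVec_inl (v : ι → 𝕜) (z : {i // a i = 0}) :
    (fmComb a *ᵥ v) (Sum.inl z) = v z := by
  simp [fmComb, mulVec]

@[simp] lemma fmComb_mulVec_inr (v : ι → 𝕜) (p : {i // 0 < a i}) (q : {i // a i < 0}) :
    (fmComb a *ᵥ v) (Sum.inr (p, q)) = -a q * v p + a p * v q := by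
  simp [fmComb, mulVec, dotProduct, Pi.single_apply, add_mul, Finset.sum_add_distrib]

lemma fmComb_mulVec_self : fmComb a *ᵥ a = 0 := by
  ext (z | ⟨p, q⟩)
  · simpa using z.2
  · simp only [fmComb_mulVec_inr, Pi.zero_apply]; ring

end fmComb

variable [IsStrictOrderedRing 𝕜]

lemma fmComb_nonneg {ι : Type*} [DecidableEq ι] (a : ι → 𝕜) : ∀ r i, 0 ≤ fmComb a r i
  | Sum.inl z, i => by
    simp only [fmComb, of_apply, Sum.elim_inl, Pi.single_apply]
    split_ifs <;> norm_num
  | Sum.inr (p, q), i => by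
    simp only [fmComb, of_apply, Sum.elim_inr, Pi.add_apply, Pi.single_apply]
    have := p.2; have := q.2
    split_ifs <;> linarith

/-- The one-variable case of Fourier–Motzkin elimination. -/
lemma exists_forall_mul_add_le {ι : Type*} [Finite ι] (a s b : ι → 𝕜)
    (hzero : ∀ i, a i = 0 → s i ≤ b i)
    (hpair : ∀ p q, 0 < a p → a q < 0 → -a q * s p + a p * s q ≤ -a q * b p + a p * b q) :
    ∃ t, ∀ i, a i * t + s i ≤ b i := by
  obtain ⟨t, hlow, hupp⟩ := exists_between_of_forall_le
    (fun p : {i // 0 < a i} => (b p - s p) / a p) (fun q : {i // a i < 0} => (b q - s q) / a q)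
    fun ⟨p, hp⟩ ⟨q, hq⟩ => by
      rw [← neg_div_neg_eq, div_le_div_iff₀ (neg_pos.2 hq) hp]
      linarith [hpair p q hp hq]
  refine ⟨t, fun i => ?_⟩
  rcases lt_trichotomy (a i) 0 with hi | hi | hi
  · have := hlow ⟨i, hi⟩
    rw [div_le_iff_of_neg hi] at this
    linarith
  · simpa [hi] using hzero i hi
  · have := hupp ⟨i, hi⟩
    rw [le_div_iff₀ hi] at this
    linarith

section FourierMotzkin

variable {ι : Type*} [Fintype ι] [DecidableEq ι] {n : ℕ} (A : Matrix ι (Fin (n + 1)) 𝕜)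

lemma exists_mulVec_le_of_fmComb {b : ι → 𝕜} {x' : Fin n → 𝕜}
    (hx' : (fmComb (A · 0) * A).submatrix id Fin.succ *ᵥ x' ≤ fmComb (A · 0) *ᵥ b) :
    ∃ x, A *ᵥ x ≤ b := by
  set s := A.submatrix id Fin.succ *ᵥ x'
  have hs : (fmComb (A · 0) * A).submatrix id Fin.succ *ᵥ x' = fmComb (A · 0) *ᵥ s := by
    rw [mulVec_mulVec]; rfl
  rw [hs] at hx'
  obtain ⟨t, ht⟩ := exists_forall_mul_add_le (A · 0) s b
    (fun i hi => by simpa using hx' (Sum.inl ⟨i, hi⟩))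
    (fun p q hp hq => by simpa using hx' (Sum.inr (⟨p, hp⟩, ⟨q, hq⟩)))
  refine ⟨Fin.cons t x', fun i => ?_⟩
  simpa [mulVec, dotProduct, Fin.sum_univ_succ, s] using ht i

lemma exists_certificate_of_fmComb {b : ι → 𝕜} {y' : _ → 𝕜} (hy'0 : 0 ≤ y')
    (hy'A : y' ᵥ* (fmComb (A · 0) * A).submatrix id Fin.succ = 0)
    (hy'b : y' ⬝ᵥ (fmComb (A · 0) *ᵥ b) < 0) :
    ∃ y, 0 ≤ y ∧ y ᵥ* A = 0 ∧ y ⬝ᵥ b < 0 := by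
  refine ⟨y' ᵥ* fmComb (A · 0), fun i => ?_, ?_, by rwa [← dotProduct_mulVec]⟩
  · exact Finset.sum_nonneg fun r _ => mul_nonneg (hy'0 r) (fmComb_nonneg _ r i)
  · rw [vecMul_vecMul]
    ext j
    refine Fin.cases ?_ (fun k => congrFun hy'A k) j
    change y' ⬝ᵥ (fmComb (A · 0) *ᵥ (A · 0)) = 0
    rw [fmComb_mulVec_self, dotProduct_zero]

end FourierMotzkin

theorem farkas_fin (n : ℕ) {ι : Type*} [Fintype ι] (A : Matrix ι (Fin n) 𝕜) (b : ι → 𝕜) :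
    (∃ x, A *ᵥ x ≤ b) ∨ ∃ y, 0 ≤ y ∧ y ᵥ* A = 0 ∧ y ⬝ᵥ b < 0 := by
  induction n generalizing ι with
  | zero =>
    by_cases hb : 0 ≤ b
    · exact .inl ⟨0, by simpa using hb⟩
    · obtain ⟨i, hi⟩ : ∃ i, b i < 0 := by simpa [Pi.le_def] using hb
      exact .inr ⟨Pi.single i 1, Pi.single_nonneg.2 zero_le_one, Subsingleton.elim _ _,
        by simpa using hi⟩
  | succ n ih =>
    rcases ih ((fmComb (A · 0) * A).submatrix id Fin.succ) (fmComb (A · 0) *ᵥ b) with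
      ⟨x', hx'⟩ | ⟨y', hy'0, hy'A, hy'b⟩
    · exact .inl (exists_mulVec_le_of_fmComb A hx')
    · exact .inr (exists_certificate_of_fmComb A hy'0 hy'A hy'b)

theorem farkas {ι κ : Type*} [Fintype ι] [Fintype κ] (A : Matrix ι κ 𝕜) (b : ι → 𝕜) :
    (∃ x, A *ᵥ x ≤ b) ∨ ∃ y, 0 ≤ y ∧ y ᵥ* A = 0 ∧ y ⬝ᵥ b < 0 := by
  let e := Fintype.equivFin κ
  rcases farkas_fin _ (A.submatrix id e.symm) b with ⟨x, hx⟩ | ⟨y, hy0, hyA, hyb⟩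
  · refine .inl ⟨x ∘ e, ?_⟩
    simpa [submatrix_mulVec_equiv] using hx
  · refine .inr ⟨y, hy0, funext fun k => ?_, hyb⟩
    simpa [vecMul, dotProduct] using congrFun hyA (e k)

theorem farkas_nonneg {ι κ : Type*} [Fintype ι] [Fintype κ] (A : Matrix ι κ 𝕜) (b : ι → 𝕜) :
    (∃ x, 0 ≤ x ∧ A *ᵥ x ≤ b) ∨ ∃ y, 0 ≤ y ∧ 0 ≤ y ᵥ* A ∧ y ⬝ᵥ b < 0 := by
  rcases farkas (fromRows A (-1 : Matrix κ κ 𝕜)) (Sum.elim b 0) with ⟨x, hx⟩ | ⟨y, hy0, hyA, hyb⟩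
  · simp only [fromRows_mulVec, Sum.elim_le_elim_iff, neg_mulVec, one_mulVec] at hx
    exact .inl ⟨x, neg_nonpos.1 hx.2, hx.1⟩
  · rw [← Sum.elim_comp_inl_inr y, sumElim_vecMul_fromRows, vecMul_neg, vecMul_one,
      ← sub_eq_add_neg, sub_eq_zero] at hyA
    rw [← Sum.elim_comp_inl_inr y, sumElim_dotProduct_sumElim, dotProduct_zero, add_zero] at hyb
    exact .inr ⟨y ∘ Sum.inl, fun i => hy0 _, hyA ▸ fun k => hy0 _, hyb⟩

theorem exists_avg_le_or_exists_lt {F C : Type*} [Fintype F] [Fintype C] (w : F → C → 𝕜)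
    (d : C → 𝕜) :
    (∃ μ : F → 𝕜, (∀ f, 0 ≤ μ f) ∧ ∑ f, μ f = 1 ∧ ∀ c, ∑ f, μ f * w f c ≤ d c) ∨
      ∃ z : C → 𝕜, (∀ c, 0 ≤ z c) ∧ ∀ f, ∑ c, z c * d c < ∑ c, z c * w f c := by
  let M : Matrix (Option C) F 𝕜 := Matrix.of fun r f => r.elim (-1) fun c => w f c - d c
  rcases farkas_nonneg M (fun r => r.elim (-1) fun _ => 0) with ⟨x, hx0, hx⟩ | ⟨y, hy0, hyM, hyb⟩
  · have hS : 1 ≤ ∑ f, x f := by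
      have := hx none
      simp only [M, mulVec, dotProduct, of_apply, Option.elim_none, neg_mul, one_mul,
        Finset.sum_neg_distrib, neg_le_neg_iff] at this
      linarith
    have hc : ∀ c, ∑ f, x f * w f c ≤ (∑ f, x f) * d c := by
      intro c
      have := hx (some c)
      simp only [M, mulVec, dotProduct, of_apply, Option.elim_some, sub_mul,
        Finset.sum_sub_distrib, sub_nonpos] at this
      rw [Finset.sum_mul]
      simp_rw [mul_comm (x _)]
      linarith
    refine .inl ⟨fun f => x f / ∑ f, x f, fun f => div_nonneg (hx0 f) (by linarith), ?_,
      fun c => ?_⟩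
    · rw [← Finset.sum_div, div_self (by linarith)]
    · simp_rw [div_mul_eq_mul_div, ← Finset.sum_div]
      rw [div_le_iff₀ (by linarith), mul_comm]
      exact hc c
  · have hb : 0 < y none := by simpa [dotProduct, Fintype.sum_option] using hyb
    refine .inr ⟨fun c => y (some c), fun c => hy0 _, fun f => ?_⟩
    have := hyM f
    simp only [M, vecMul, dotProduct, of_apply, Fintype.sum_option, Option.elim_none,
      Option.elim_some, mul_neg, mul_one, mul_sub, Finset.sum_sub_distrib, Pi.zero_apply] at this
    linarith

end Farkas

lemma val_eq_sum_cVert {σ : Type} [Fintype σ] (ar : σ → ℕ) {I A : Type} [Fintype I]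
    (vI : ∀ R : σ, (Fin (ar R) → I) → ℚ) (vA : ∀ R : σ, (Fin (ar R) → A) → WithTop ℚ)
    (h : I → A) :
    Val ar vI vA h = ∑ c : CVert σ ar I, (vI c.1 c.2 : WithTop ℚ) * vA c.1 fun i => h (c.2 i) := by
  rw [Val, Fintype.sum_sigma]

section FracHom

variable {σ : Type} [Fintype σ] {ar : σ → ℕ} {A B : Type} [Fintype A] [DecidableEq A] [Fintype B]
  {vA : ∀ R : σ, (Fin (ar R) → A) → WithTop ℚ} {vB : ∀ R : σ, (Fin (ar R) → B) → WithTop ℚ}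
  {I : Type} [Fintype I] {vI : ∀ R : σ, (Fin (ar R) → I) → ℚ}

lemma sum_coe_mul_val_comp_le {μ : (A → B) → ℚ} (hμ : IsFracHom ar vA vB μ) (hI : NNeg ar vI)
    (h : I → A) : ∑ f, (μ f : WithTop ℚ) * Val ar vI vB (fun i => f (h i)) ≤ Val ar vI vA h := by
  calc ∑ f, (μ f : WithTop ℚ) * Val ar vI vB (fun i => f (h i))
      = ∑ R, ∑ v, (vI R v : WithTop ℚ) * ∑ f, (μ f : WithTop ℚ) * vB R (fun i => f (h (v i))) := by
        simp only [Val, coe_mul_sum]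
        rw [Finset.sum_comm]
        refine Finset.sum_congr rfl fun R _ => ?_
        rw [Finset.sum_comm]
        simp only [mul_left_comm]
    _ ≤ Val ar vI vA h :=
        Finset.sum_le_sum fun R _ => Finset.sum_le_sum fun v _ =>
          coe_mul_le_coe_mul (hI R v) (hμ.2.2 R _)

lemma opt_le_opt_of_isFracHom [DecidableEq I] {μ : (A → B) → ℚ} (hμ : IsFracHom ar vA vB μ)
    (hI : NNeg ar vI) :
    Opt ar vI vB ≤ Opt ar vI vA :=
  Finset.le_inf fun h _ => by
    obtain ⟨f, hf⟩ := exists_le_sum_coe_mul hμ.1 hμ.2.1 fun f => Val ar vI vB (fun i => f (h i))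
    exact (Finset.inf_le (Finset.mem_univ _)).trans (hf.trans (sum_coe_mul_val_comp_le hμ hI h))

end FracHom

section Forward

variable {σ : Type} (ar : σ → ℕ) {A B : Type}
  (vA : ∀ R : σ, (Fin (ar R) → A) → WithTop ℚ) (vB : ∀ R : σ, (Fin (ar R) → B) → WithTop ℚ)

def PreservesFinite (f : A → B) : Prop :=
  ∀ R (a : Fin (ar R) → A), vA R a ≠ ⊤ → vB R (fun i => f (a i)) ≠ ⊤

/-- Rational data of the linear program whose solutions are the fractional homomorphisms:
constraint `c` reads `∑ f, μ f * pushCost f c ≤ cost c`. Tuples of infinite `A`-cost impose no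
constraint, so both costs vanish there. -/
def cost (c : CVert σ ar A) : ℚ := (vA c.1 c.2).untopD 0

def pushCost (f : A → B) (c : CVert σ ar A) : ℚ :=
  if vA c.1 c.2 = ⊤ then 0 else (vB c.1 fun i => f (c.2 i)).untopD 0

/-- The extra weight `ε` on every finite-cost tuple makes each assignment that does not preserve
finiteness infinitely expensive in `B`. -/
def sepWeights (z : CVert σ ar A → ℚ) (ε : ℚ) : ∀ R : σ, (Fin (ar R) → A) → ℚ :=
  fun R t => if vA R t = ⊤ then 0 else z ⟨R, t⟩ + ε

variable {ar vA vB}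

section sepWeights

variable {z : CVert σ ar A → ℚ} {ε : ℚ}

lemma ne_top_of_sepWeights_ne_zero {c : CVert σ ar A} (hc : sepWeights ar vA z ε c.1 c.2 ≠ 0) :
    vA c.1 c.2 ≠ ⊤ := fun htop => by
  simp [sepWeights, htop] at hc

lemma nNeg_sepWeights (hz : ∀ c, 0 ≤ z c) (hε : 0 ≤ ε) : NNeg ar (sepWeights ar vA z ε) :=
  fun R t => by
    dsimp only [sepWeights]
    split_ifs
    exacts [le_rfl, by linarith [hz ⟨R, t⟩]]

variable [Fintype σ] [Fintype A]

lemma val_id_sepWeights : Val ar (sepWeights ar vA z ε) vA id =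
    ↑(∑ c, sepWeights ar vA z ε c.1 c.2 * cost ar vA c) := by
  rw [val_eq_sum_cVert]
  exact sum_coe_mul_eq_coe _ _ _ fun c _ => ne_top_of_sepWeights_ne_zero

lemma val_sepWeights_of_preservesFinite {f : A → B} (hf : PreservesFinite ar vA vB f) :
    Val ar (sepWeights ar vA z ε) vB f = ↑(∑ c, sepWeights ar vA z ε c.1 c.2 * cost ar vA c +
      (∑ c, z c * (pushCost ar vA vB f c - cost ar vA c) +
        ε * ∑ c, (pushCost ar vA vB f c - cost ar vA c))) := by
  rw [val_eq_sum_cVert, sum_coe_mul_eq_coe _ _ _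
    fun c _ hc => hf _ _ (ne_top_of_sepWeights_ne_zero hc), WithTop.coe_inj, ← sub_eq_iff_eq_add']
  simp only [← Finset.sum_sub_distrib, Finset.mul_sum, ← Finset.sum_add_distrib]
  refine Finset.sum_congr rfl fun c _ => ?_
  by_cases hc : vA c.1 c.2 = ⊤
  · simp [sepWeights, pushCost, cost, hc]
  · simp only [sepWeights, pushCost, cost, hc, if_false]
    ring

lemma val_sepWeights_eq_top (hz : ∀ c, 0 ≤ z c) (hε : 0 < ε) {f : A → B}
    (hf : ¬PreservesFinite ar vA vB f) : Val ar (sepWeights ar vA z ε) vB f = ⊤ := by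
  simp only [PreservesFinite, not_forall, not_not] at hf
  obtain ⟨R, a, ha, hfa⟩ := hf
  rw [val_eq_sum_cVert, sum_coe_mul_eq_top_iff]
  refine ⟨⟨R, a⟩, Finset.mem_univ _, ?_, hfa⟩
  simp only [sepWeights, if_neg ha]
  linarith [hz ⟨R, a⟩]

end sepWeights

variable [Fintype σ] [Fintype A] [DecidableEq A] [Fintype B]

lemma isFracHom_of_avg_le {μ : {f // PreservesFinite ar vA vB f} → ℚ} (hμ0 : ∀ f, 0 ≤ μ f)
    (hμ1 : ∑ f, μ f = 1) (hμ : ∀ c, ∑ f, μ f * pushCost ar vA vB f.1 c ≤ cost ar vA c) :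
    IsFracHom ar vA vB fun f => if h : PreservesFinite ar vA vB f then μ ⟨f, h⟩ else 0 := by
  refine ⟨fun f => ?_, by rwa [sum_dite_eq_sum_subtype], fun R a => ?_⟩
  · dsimp only
    split_ifs
    exacts [hμ0 _, le_rfl]
  by_cases ha : vA R a = ⊤
  · exact ha ▸ le_top
  rw [sum_coe_mul_eq_coe _ _ _ fun f _ hf => ?_]
  · calc ((∑ f, (if h : PreservesFinite ar vA vB f then μ ⟨f, h⟩ else 0) *
          (vB R fun i => f (a i)).untopD 0 : ℚ) : WithTop ℚ)
        = ((∑ f, μ f * pushCost ar vA vB f.1 ⟨R, a⟩ : ℚ) : WithTop ℚ) := by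
          rw [← sum_dite_eq_sum_subtype]
          congr 1
          refine Finset.sum_congr rfl fun f _ => ?_
          split_ifs <;> simp [pushCost, ha]
      _ ≤ cost ar vA ⟨R, a⟩ := WithTop.coe_le_coe.2 (hμ _)
      _ = vA R a := by
          obtain ⟨q, hq⟩ := WithTop.ne_top_iff_exists.1 ha
          simp [cost, ← hq]
  · by_cases h : PreservesFinite ar vA vB f
    · exact h R a ha
    · simp [h] at hf

lemma exists_opt_lt_of_separating {z : CVert σ ar A → ℚ} (hz : ∀ c, 0 ≤ z c)
    (hsep : ∀ f : {f // PreservesFinite ar vA vB f},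
      ∑ c, z c * cost ar vA c < ∑ c, z c * pushCost ar vA vB f.1 c) :
    ∃ vI : ∀ R : σ, (Fin (ar R) → A) → ℚ, NNeg ar vI ∧ Opt ar vI vA < Opt ar vI vB := by
  obtain ⟨ε, hε, hδε⟩ := exists_pos_forall_add_mul_pos
    (fun f : {f // PreservesFinite ar vA vB f} =>
      ∑ c, z c * (pushCost ar vA vB f.1 c - cost ar vA c))
    (fun f => ∑ c, (pushCost ar vA vB f.1 c - cost ar vA c))
    (fun f => by simpa [mul_sub, Finset.sum_sub_distrib] using hsep f)
  refine ⟨sepWeights ar vA z ε, nNeg_sepWeights hz hε.le, ?_⟩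
  calc Opt ar (sepWeights ar vA z ε) vA
      ≤ Val ar (sepWeights ar vA z ε) vA id := Finset.inf_le (Finset.mem_univ _)
    _ = _ := val_id_sepWeights
    _ < Opt ar (sepWeights ar vA z ε) vB := (Finset.lt_inf_iff (WithTop.coe_lt_top _)).2
        fun f _ => by
          by_cases hf : PreservesFinite ar vA vB f
          · rw [val_sepWeights_of_preservesFinite hf, WithTop.coe_lt_coe]
            exact lt_add_of_pos_right _ (hδε ⟨f, hf⟩)
          · rw [val_sepWeights_eq_top hz hε hf]
            exact WithTop.coe_lt_top _

theorem exists_isFracHom_of_forall_opt_le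
    (hT : ∀ (I : Type) [Fintype I] [DecidableEq I] (vI : ∀ R : σ, (Fin (ar R) → I) → ℚ),
      NNeg ar vI → Opt ar vI vB ≤ Opt ar vI vA) :
    ∃ μ, IsFracHom ar vA vB μ := by
  rcases exists_avg_le_or_exists_lt
    (fun f : {f // PreservesFinite ar vA vB f} => pushCost ar vA vB f.1) (cost ar vA) with
    ⟨μ, hμ0, hμ1, hμ⟩ | ⟨z, hz, hsep⟩
  · exact ⟨_, isFracHom_of_avg_le hμ0 hμ1 hμ⟩
  · obtain ⟨vI, hI, hlt⟩ := exists_opt_lt_of_separating hz hsep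
    exact absurd (hT A vI hI) hlt.not_ge

end Forward

theorem stmt_1_general {σ : Type} [Fintype σ] (ar : σ → ℕ)
    {A B : Type} [Fintype A] [DecidableEq A] [Fintype B]
    (vA : ∀ R : σ, (Fin (ar R) → A) → WithTop ℚ)
    (vB : ∀ R : σ, (Fin (ar R) → B) → WithTop ℚ) :
    (∀ (I : Type) [Fintype I] [DecidableEq I]
        (vI : ∀ R : σ, (Fin (ar R) → I) → ℚ), NNeg ar vI →
        ∀ τ : ℚ, ¬ (Opt ar vI vA ≤ (τ : WithTop ℚ) ∧ (τ : WithTop ℚ) < Opt ar vI vB)) ↔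
      ∃ μ : (A → B) → ℚ, IsFracHom ar vA vB μ := by
  simp only [forall_not_le_coe_and_coe_lt_iff]
  exact ⟨exists_isFracHom_of_forall_opt_le,
    fun ⟨_, hμ⟩ _ _ _ _ hI => opt_le_opt_of_isFracHom hμ hI⟩

theorem stmt_1 {σ : Type} [Fintype σ] (ar : σ → ℕ) (har : ∀ R, 0 < ar R)
    {A B : Type} [Fintype A] [DecidableEq A] [Fintype B]
    (vA : ∀ R : σ, (Fin (ar R) → A) → WithTop ℚ)
    (vB : ∀ R : σ, (Fin (ar R) → B) → WithTop ℚ) :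
    (∀ (I : Type) [Fintype I] [DecidableEq I]
        (vI : ∀ R : σ, (Fin (ar R) → I) → ℚ), NNeg ar vI →
        ∀ τ : ℚ, ¬ (Opt ar vI vA ≤ (τ : WithTop ℚ) ∧ (τ : WithTop ℚ) < Opt ar vI vB)) ↔
      ∃ μ : (A → B) → ℚ, IsFracHom ar vA vB μ :=
  stmt_1_general ar vA vB

end PVCSP
end

section
/- Let σ be a finite signature and let I, A be valued σ-structures with I non-negative finite-valued. Then there exist non-negative finite-valued σ-structures Y₁ and Y₂ such that: (1) there is a dual fractional homomorphism from I to Y₁; (2) Y₁ ≡₁ Y₂ (they have the same iterated degree sequence); and (3) Opt(Y₂,A) ≤ Opt^{SA¹}(I,A). -/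
open scoped BigOperators Classical

/-!
If `SA¹(I,A)` is infeasible, `Y₁ = Y₂ = I` will do. Otherwise, since the program has rational
data, Fourier–Motzkin elimination gives it a rational optimal solution `(pv, pc)`. For a common
denominator `m`, every constraint distribution `pc c` is the empirical distribution of `m` tuples
`L c ℓ`, and by the marginal constraints the `i`-th coordinates of these tuples have the same
empirical distribution as the `m` values `g u ·` of the variable `u = c i`; hence they agree up
to a permutation `Φ c u` of `Fin m` (the `SA¹` constraints also make tuples consistent on
repeated variables).

Both structures live on `I × Fin m` and are `m`-fold covers of `I` with weights divided by `m`: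
`Y₁` is `m` disjoint copies of `I`, and receives the dual fractional homomorphism `u ↦ (u, j)`
with `j` uniform; in `Y₂` the `ℓ`-th copy of `c` uses copy `Φ c u ℓ` of each variable `u`, so
that the assignment `(u, j) ↦ g u j` gives it the tuple `L c ℓ` and costs exactly the optimal
value of `SA¹`. Covering maps preserve iterated degrees, so `Y₁ ≡₁ Y₂`.
-/

open Finset

/-! ### Polyhedra and linear programs -/

lemma Finite.exists_between_of_le {α β γ : Type*} [Finite α] [Finite β] [LinearOrder γ]
    [Nonempty γ] (l : α → γ) (u : β → γ) (h : ∀ a b, l a ≤ u b) :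
    ∃ z, (∀ a, l a ≤ z) ∧ ∀ b, z ≤ u b := by
  rcases isEmpty_or_nonempty β with hβ | hβ
  · rcases isEmpty_or_nonempty α with hα | hα
    · exact ⟨Classical.arbitrary γ, fun a => isEmptyElim a, fun b => isEmptyElim b⟩
    · obtain ⟨a₀, ha₀⟩ := Finite.exists_max l
      exact ⟨l a₀, ha₀, fun b => isEmptyElim b⟩
  · obtain ⟨b₀, hb₀⟩ := Finite.exists_min u
    exact ⟨u b₀, fun a => h a b₀, hb₀⟩

section Polyhedral

variable {𝕜 : Type*} [Field 𝕜] [LinearOrder 𝕜]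
  {E F : Type*} [AddCommGroup E] [Module 𝕜 E] [AddCommGroup F] [Module 𝕜 F]

variable (𝕜) in
def IsPolyhedral (S : Set E) : Prop :=
  ∃ (κ : Type) (_ : Finite κ) (f : κ → E →ₗ[𝕜] 𝕜) (b : κ → 𝕜), S = {x | ∀ k, f k x ≤ b k}

namespace IsPolyhedral

lemma univ : IsPolyhedral 𝕜 (Set.univ : Set E) :=
  ⟨Empty, inferInstance, Empty.elim, Empty.elim, by ext; simp⟩

lemma inter {S T : Set E} (hS : IsPolyhedral 𝕜 S) (hT : IsPolyhedral 𝕜 T) :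
    IsPolyhedral 𝕜 (S ∩ T) := by
  obtain ⟨κ, _, f, b, rfl⟩ := hS
  obtain ⟨κ', _, f', b', rfl⟩ := hT
  exact ⟨κ ⊕ κ', inferInstance, Sum.elim f f', Sum.elim b b', by ext; simp [Sum.forall]⟩

lemma iInter {ι : Type} [Finite ι] {S : ι → Set E} (hS : ∀ i, IsPolyhedral 𝕜 (S i)) :
    IsPolyhedral 𝕜 (⋂ i, S i) := by
  choose κ _ f b hS using hS
  exact ⟨Σ i, κ i, inferInstance, fun k => f k.1 k.2, fun k => b k.1 k.2, by
    ext; simp [hS, Sigma.forall]⟩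

lemma preimage {S : Set F} (hS : IsPolyhedral 𝕜 S) (g : E →ₗ[𝕜] F) :
    IsPolyhedral 𝕜 (g ⁻¹' S) := by
  obtain ⟨κ, _, f, b, rfl⟩ := hS
  exact ⟨κ, ‹_›, fun k => f k ∘ₗ g, b, rfl⟩

lemma setOf_and {P Q : E → Prop} (hP : IsPolyhedral 𝕜 {x | P x})
    (hQ : IsPolyhedral 𝕜 {x | Q x}) : IsPolyhedral 𝕜 {x | P x ∧ Q x} :=
  hP.inter hQ

lemma setOf_forall {ι : Type} [Finite ι] {P : ι → E → Prop}
    (hP : ∀ i, IsPolyhedral 𝕜 {x | P i x}) : IsPolyhedral 𝕜 {x | ∀ i, P i x} := by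
  simpa only [Set.ofPred_forall] using iInter hP

lemma setOf_imp (p : Prop) {P : E → Prop} (hP : p → IsPolyhedral 𝕜 {x | P x}) :
    IsPolyhedral 𝕜 {x | p → P x} := by
  by_cases hp : p
  · simpa [hp] using hP hp
  · simpa [hp] using univ

variable [IsStrictOrderedRing 𝕜]

lemma setOf_le {f g : E → 𝕜} (h : IsLinearMap 𝕜 fun x => f x - g x - (f 0 - g 0)) :
    IsPolyhedral 𝕜 {x | f x ≤ g x} :=
  ⟨Unit, inferInstance, fun _ => IsLinearMap.mk' _ h, fun _ => -(f 0 - g 0), by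
    ext x
    simp only [Set.mem_ofPred_eq, IsLinearMap.mk'_apply, forall_const]
    constructor <;> intro <;> linarith⟩

lemma setOf_eq {f g : E → 𝕜} (h : IsLinearMap 𝕜 fun x => f x - g x - (f 0 - g 0)) :
    IsPolyhedral 𝕜 {x | f x = g x} := by
  set L := IsLinearMap.mk' _ h
  refine ⟨Bool, inferInstance, fun k => if k then L else -L,
    fun k => if k then -(f 0 - g 0) else f 0 - g 0, ?_⟩
  ext x
  simp only [Set.mem_ofPred_eq, Bool.forall_bool, if_true, if_false, LinearMap.neg_apply,
    L, IsLinearMap.mk'_apply, Bool.false_eq_true]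
  constructor
  · intro hx; constructor <;> linarith
  · rintro ⟨h₁, h₂⟩; linarith

/-- Fourier–Motzkin elimination: the projection is cut out by the inequalities free of the last
coordinate and by the combinations of one upper and one lower bound on it. -/
lemma image_fst {S : Set (E × 𝕜)} (hS : IsPolyhedral 𝕜 S) :
    IsPolyhedral 𝕜 (Prod.fst '' S) := by
  obtain ⟨κ, _, f, b, rfl⟩ := hS
  set g : κ → E →ₗ[𝕜] 𝕜 := fun k => f k ∘ₗ LinearMap.inl 𝕜 E 𝕜
  set a : κ → 𝕜 := fun k => f k (0, 1)
  have hf : ∀ k y z, f k (y, z) = g k y + a k * z := by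
    intro k y z
    rw [show ((y, z) : E × 𝕜) = (y, 0) + z • (0, 1) by simp, map_add, map_smul, smul_eq_mul,
      mul_comm]
    rfl
  refine ⟨{k // a k = 0} ⊕ ({k // 0 < a k} × {k // a k < 0}), inferInstance,
    Sum.elim (fun k => g k) (fun pq => (-a pq.2) • g pq.1 + a pq.1 • g pq.2),
    Sum.elim (fun k => b k) (fun pq => -a pq.2 * b pq.1 + a pq.1 * b pq.2), ?_⟩
  ext y
  simp only [Set.mem_image, Set.mem_ofPred_eq, Sum.forall, Sum.elim_inl, Sum.elim_inr,
    Prod.forall, Subtype.forall, LinearMap.add_apply, LinearMap.smul_apply, smul_eq_mul,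
    Prod.exists, exists_and_right, exists_eq_right, hf]
  constructor
  · rintro ⟨z, hz⟩
    refine ⟨fun k hk => by simpa [hk] using hz k, fun p hp q hq => ?_⟩
    nlinarith [hz p, hz q, mul_le_mul_of_nonneg_left (hz p) (neg_nonneg.mpr hq.le),
      mul_le_mul_of_nonneg_left (hz q) hp.le]
  · rintro ⟨h0, hpq⟩
    obtain ⟨z, hlo, hup⟩ := Finite.exists_between_of_le
      (fun q : {k // a k < 0} => (b q - g q y) / a q)
      (fun p : {k // 0 < a k} => (b p - g p y) / a p) fun ⟨q, hq⟩ ⟨p, hp⟩ => by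
        rw [← neg_div_neg_eq, div_le_div_iff₀ (neg_pos.mpr hq) hp]
        linarith [hpq p hp q hq]
    refine ⟨z, fun k => ?_⟩
    rcases lt_trichotomy (a k) 0 with hk | hk | hk
    · have := hlo ⟨k, hk⟩
      rw [div_le_iff_of_neg hk] at this
      linarith
    · simpa [hk] using h0 k hk
    · have := hup ⟨k, hk⟩
      rw [le_div_iff₀ hk] at this
      linarith

lemma image_fst_pi {n : ℕ} {S : Set (F × (Fin n → 𝕜))} (hS : IsPolyhedral 𝕜 S) :
    IsPolyhedral 𝕜 (Prod.fst '' S) := by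
  induction n with
  | zero =>
    convert hS.preimage (LinearMap.inl 𝕜 F (Fin 0 → 𝕜)) using 1
    ext y
    constructor
    · rintro ⟨⟨y, v⟩, hv, rfl⟩
      rwa [Subsingleton.elim v 0] at hv
    · exact fun hy => ⟨_, hy, rfl⟩
  | succ n ih =>
    set φ := (LinearEquiv.prodAssoc 𝕜 F (Fin n → 𝕜) 𝕜).trans
      ((LinearEquiv.refl 𝕜 F).prodCongr ((LinearEquiv.prodComm 𝕜 _ 𝕜).trans
        (Fin.consLinearEquiv 𝕜 fun _ : Fin (n + 1) => 𝕜)))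
    convert ih (image_fst (hS.preimage φ.toLinearMap)) using 1
    ext y
    simp only [Set.mem_image, Set.mem_preimage, Prod.exists, exists_and_right, exists_eq_right]
    constructor
    · rintro ⟨v, hv⟩
      refine ⟨Fin.tail v, v 0, ?_⟩
      change (y, Fin.cons (v 0) (Fin.tail v)) ∈ S
      rwa [Fin.cons_self_tail]
    · rintro ⟨w, z, hw⟩
      exact ⟨_, hw⟩

lemma image_fst_of_finite [Module.Finite 𝕜 E] {S : Set (F × E)} (hS : IsPolyhedral 𝕜 S) :
    IsPolyhedral 𝕜 (Prod.fst '' S) := by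
  set e := (Module.finBasis 𝕜 E).equivFun
  convert image_fst_pi (hS.preimage ((LinearEquiv.refl 𝕜 F).prodCongr e.symm).toLinearMap)
    using 1
  ext y
  simp only [Set.mem_image, Set.mem_preimage, Prod.exists, exists_and_right, exists_eq_right]
  constructor
  · rintro ⟨v, hv⟩
    exact ⟨e v, by simpa using hv⟩
  · rintro ⟨w, hw⟩
    exact ⟨_, hw⟩

lemma exists_isLeast {T : Set 𝕜} (hT : IsPolyhedral 𝕜 T) (hne : T.Nonempty)
    (hbdd : BddBelow T) : ∃ z, IsLeast T z := by
  obtain ⟨κ, _, f, b, rfl⟩ := hT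
  set a : κ → 𝕜 := fun k => f k 1
  have hf : ∀ k z, f k z = a k * z := fun k z => by
    simpa [a, mul_comm] using (f k).map_smul z 1
  have hset : {x | ∀ k, f k x ≤ b k} = {z | ∀ k, a k * z ≤ b k} := by
    ext z
    simp only [Set.mem_ofPred_eq, hf]
  rw [hset] at hne hbdd ⊢
  obtain ⟨z₀, hz₀⟩ := hne
  obtain ⟨β, hβ⟩ := hbdd
  have hdown : ∀ z ≤ z₀, (∀ k, a k < 0 → a k * z ≤ b k) → z ∈ {z | ∀ k, a k * z ≤ b k} := by
    intro z hz hneg k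
    rcases lt_or_ge (a k) 0 with hk | hk
    · exact hneg k hk
    · nlinarith [hz₀ k]
  rcases isEmpty_or_nonempty {k // a k < 0} with hN | hN
  · have := hβ (hdown (min z₀ (β - 1)) (min_le_left _ _) fun k hk => isEmptyElim
      (⟨k, hk⟩ : {k // a k < 0}))
    linarith [min_le_right z₀ (β - 1)]
  obtain ⟨q, hq⟩ := Finite.exists_max fun q : {k // a k < 0} => b q / a q
  have hlow : ∀ z ∈ {z | ∀ k, a k * z ≤ b k}, b q / a q ≤ z := fun z hz => by
    rw [div_le_iff_of_neg q.2]
    linarith [hz q]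
  refine ⟨b q / a q, hdown _ (hlow z₀ hz₀) fun k hk => ?_, hlow⟩
  linarith [(div_le_iff_of_neg hk).1 (hq ⟨k, hk⟩)]

lemma exists_isMinOn [Module.Finite 𝕜 E] {S : Set E} (hS : IsPolyhedral 𝕜 S)
    (hne : S.Nonempty) {c : E → 𝕜} (hc : IsLinearMap 𝕜 c) (hbdd : BddBelow (c '' S)) :
    ∃ x ∈ S, IsMinOn c S x := by
  set C := IsLinearMap.mk' c hc
  set T := Prod.fst '' {p : 𝕜 × E | p.2 ∈ S ∧ c p.2 ≤ p.1}
  have hle : IsPolyhedral 𝕜 {p : 𝕜 × E | c p.2 ≤ p.1} :=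
    ⟨Unit, inferInstance, fun _ => C ∘ₗ LinearMap.snd 𝕜 𝕜 E - LinearMap.fst 𝕜 𝕜 E,
      fun _ => 0, by ext; simp [C]⟩
  have hT : IsPolyhedral 𝕜 T :=
    image_fst_of_finite ((hS.preimage (LinearMap.snd 𝕜 𝕜 E)).inter hle)
  have hmemT : ∀ z, z ∈ T ↔ ∃ x ∈ S, c x ≤ z := by
    intro z
    simp [T]
  obtain ⟨x₀, hx₀⟩ := hne
  obtain ⟨β, hβ⟩ := hbdd
  obtain ⟨z, hzT, hzle⟩ := hT.exists_isLeast ⟨c x₀, (hmemT _).2 ⟨x₀, hx₀, le_rfl⟩⟩ ⟨β, by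
    intro z hz
    obtain ⟨x, hx, hxz⟩ := (hmemT z).1 hz
    exact (hβ ⟨x, hx, rfl⟩).trans hxz⟩
  obtain ⟨x, hx, hxz⟩ := (hmemT z).1 hzT
  exact ⟨x, hx, fun y hy => hxz.trans (hzle ((hmemT _).2 ⟨y, hy, le_rfl⟩))⟩

end IsPolyhedral

end Polyhedral

lemma Multiset.map_fst_product {α β : Type*} (s : Multiset α) (t : Multiset β) :
    (s ×ˢ t).map Prod.fst = Multiset.card t • s := by
  induction t using Multiset.induction_on with
  | empty => simp
  | cons b t ih => simp [Multiset.product_cons, ih, succ_nsmul']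

lemma WithTop.coe_mul_eq_coe_mul_untopD {w : ℚ} {a : WithTop ℚ} (h : a = ⊤ → w = 0) :
    (w : WithTop ℚ) * a = ((w * a.untopD 0 : ℚ) : WithTop ℚ) := by
  cases a with
  | top => simp [h rfl]
  | coe q => simp [WithTop.coe_mul]

/-! ### Empirical distributions -/

section Sampling

variable {α β : Type*}

lemma sum_comp_eq_sum_card_mul [Fintype α] [DecidableEq α] [Fintype β] (S : β → α)
    (F : α → ℚ) :
    ∑ b, F (S b) = ∑ a, (#{b | S b = a} : ℚ) * F a := by
  rw [← Finset.sum_fiberwise univ S]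
  refine Finset.sum_congr rfl fun a _ => ?_
  rw [Finset.sum_congr rfl fun b hb => by rw [(Finset.mem_filter.1 hb).2], Finset.sum_const,
    nsmul_eq_mul]

lemma card_filter_comp_eq {γ : Type*} [DecidableEq α] [Fintype β] [Fintype γ] [DecidableEq γ]
    (L : β → γ) (p : γ → α) (a : α) :
    #{b | p (L b) = a} = ∑ s with p s = a, #{b | L b = s} := by
  rw [Finset.card_eq_sum_card_fiberwise (f := L) (t := {s | p s = a})
    fun b hb => by simpa using hb]
  refine Finset.sum_congr rfl fun s hs => congrArg card ?_
  ext b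
  simp only [mem_filter, mem_univ, true_and] at hs ⊢
  exact ⟨fun h => h.2, fun h => ⟨h ▸ hs, h⟩⟩

lemma exists_fin_card_filter_eq [Fintype α] [DecidableEq α] {m : ℕ} (w : α → ℕ)
    (hw : ∑ a, w a = m) :
    ∃ L : Fin m → α, ∀ a, #{ℓ | L ℓ = a} = w a := by
  obtain e : Fin m ≃ Σ a, Fin (w a) := (Fintype.equivFinOfCardEq (by simp [hw])).symm
  refine ⟨fun ℓ => (e ℓ).1, fun a => ?_⟩
  rw [card_filter, e.sum_comp (fun s => if s.1 = a then 1 else 0), Fintype.sum_sigma]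
  simp [apply_ite Finset.card]

lemma exists_fin_card_filter_eq_mul [Fintype α] [DecidableEq α] {m : ℕ} (p : α → ℚ)
    (hp : ∀ a, 0 ≤ p a) (hsum : ∑ a, p a = 1) (hden : ∀ a, (p a).den ∣ m) :
    ∃ L : Fin m → α, ∀ a, (#{ℓ | L ℓ = a} : ℚ) = m * p a := by
  have hnat : ∀ a, ∃ k : ℕ, (k : ℚ) = m * p a := by
    intro a
    obtain ⟨d, hd⟩ := hden a
    refine ⟨d * (p a).num.toNat, ?_⟩
    have hnum : ((p a).num.toNat : ℚ) = (p a).num := by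
      exact_mod_cast Int.toNat_of_nonneg (Rat.num_nonneg.2 (hp a))
    rw [Nat.cast_mul, hnum, ← Rat.mul_den_eq_num, hd, Nat.cast_mul]
    ring
  choose w hw using hnat
  obtain ⟨L, hL⟩ := exists_fin_card_filter_eq w (m := m) (by
    exact_mod_cast (show ((∑ a, w a : ℕ) : ℚ) = m by
      push_cast
      simp [hw, ← Finset.mul_sum, hsum]))
  exact ⟨L, fun a => by rw [hL, hw]⟩

lemma exists_perm_comp_eq [DecidableEq α] [Fintype β] {f g : β → α}
    (h : ∀ a, #{b | f b = a} = #{b | g b = a}) :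
    ∃ τ : Equiv.Perm β, ∀ b, f (τ b) = g b :=
  ⟨Equiv.ofFiberEquiv (f := g) (g := f) fun a =>
      Fintype.equivOfCardEq (by simp only [Fintype.card_subtype, h]),
    Equiv.ofFiberEquiv_map _⟩

lemma exists_perms_comp_eq [DecidableEq α] {k m : ℕ} {X : Type*} (x : Fin k → X)
    (L : Fin m → Fin k → α) (g : X → Fin m → α)
    (hmarg : ∀ i a, #{ℓ | g (x i) ℓ = a} = #{ℓ | L ℓ i = a})
    (hcons : ∀ ℓ i j, x i = x j → L ℓ i = L ℓ j) :
    ∃ Φ : X → Equiv.Perm (Fin m), ∀ ℓ i, g (x i) (Φ (x i) ℓ) = L ℓ i := by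
  have : ∀ u, ∃ τ : Equiv.Perm (Fin m), ∀ i, x i = u → ∀ ℓ, g u (τ ℓ) = L ℓ i := by
    intro u
    by_cases hu : ∃ i, x i = u
    · obtain ⟨i₀, rfl⟩ := hu
      obtain ⟨τ, hτ⟩ := exists_perm_comp_eq (hmarg i₀)
      exact ⟨τ, fun i hi ℓ => (hτ ℓ).trans (hcons ℓ i₀ i hi.symm)⟩
    · exact ⟨1, fun i hi => absurd ⟨i, hi⟩ hu⟩
  choose Φ hΦ using this
  exact ⟨Φ, fun ℓ i => hΦ _ i rfl ℓ⟩

lemma pos_of_card_filter_eq_mul [DecidableEq α] [Fintype β] {m : ℕ} {L : β → α} {p : α → ℚ}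
    (hL : ∀ a, (#{b | L b = a} : ℚ) = m * p a) (b : β) : 0 < p (L b) := by
  have hcard : (0 : ℚ) < #{b' | L b' = L b} := by
    exact_mod_cast Finset.card_pos.2 ⟨b, by simp⟩
  rw [hL] at hcard
  exact pos_of_mul_pos_right hcard (Nat.cast_nonneg m)

end Sampling

namespace PVCSP

lemma toE_mono : Monotone toE := by
  intro x y h
  cases y with
  | top => exact le_top
  | coe q =>
    cases x with
    | top => simp at h
    | coe p => exact EReal.coe_le_coe_iff.2 (by exact_mod_cast WithTop.coe_le_coe.1 h)

section SheraliAdams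

variable {σ : Type} [Fintype σ] {ar : σ → ℕ} {I A : Type} [Fintype I] [Fintype A]
  {vI : ∀ R : σ, (Fin (ar R) → I) → ℚ} {vA : ∀ R : σ, (Fin (ar R) → A) → WithTop ℚ} {pv : I → A → ℚ}
  {pc : ∀ R : σ, (Fin (ar R) → I) → (Fin (ar R) → A) → ℚ}

/-- Infinite costs are replaced by `0`: feasible solutions put no mass on them. -/
def saObjective (vI : ∀ R : σ, (Fin (ar R) → I) → ℚ)
    (vA : ∀ R : σ, (Fin (ar R) → A) → WithTop ℚ)
    (x : (I → A → ℚ) × (∀ R : σ, (Fin (ar R) → I) → (Fin (ar R) → A) → ℚ)) : ℚ :=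
  ∑ R, ∑ v, ∑ t, x.2 R v t * (vI R v * (vA R t).untopD 0)

lemma isLinearMap_saObjective : IsLinearMap ℚ (saObjective (I := I) vI vA) :=
  ⟨fun x y => by simp [saObjective, add_mul, Finset.sum_add_distrib],
    fun c x => by simp [saObjective, Finset.mul_sum, mul_assoc]⟩

lemma objVal_eq_saObjective [DecidableEq A] (hnn : NNeg ar vI) (h : SA1Feas ar vI vA pv pc) :
    objVal ar vI vA pc = (saObjective vI vA (pv, pc) : WithTop ℚ) := by
  simp only [objVal, saObjective, WithTop.coe_sum]
  refine Finset.sum_congr rfl fun R _ => Finset.sum_congr rfl fun v _ =>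
    Finset.sum_congr rfl fun t _ => ?_
  rw [← mul_assoc, ← WithTop.coe_mul, WithTop.coe_mul_eq_coe_mul_untopD, mul_assoc]
  intro htop
  rcases (hnn R v).eq_or_lt with h0 | hpos
  · rw [← h0, mul_zero]
  · rw [h.1.2.2.2 R v hpos t htop, zero_mul]

lemma isPolyhedral_setOf_SA1Feas [DecidableEq A] :
    IsPolyhedral ℚ {x : (I → A → ℚ) × (∀ R : σ, (Fin (ar R) → I) → (Fin (ar R) → A) → ℚ) |
      SA1Feas ar vI vA x.1 x.2} := by
  unfold SA1Feas BLPFeas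
  repeat' (first
    | apply IsPolyhedral.setOf_and
    | (apply IsPolyhedral.setOf_forall; intro)
    | (apply IsPolyhedral.setOf_imp; intro)
    | apply IsPolyhedral.setOf_le
    | apply IsPolyhedral.setOf_eq)
  all_goals
    constructor <;> intros <;> simp [Finset.sum_add_distrib, Finset.mul_sum, mul_sub] <;> ring

lemma SA1Feas.sum_pc_eq_one [DecidableEq A] (har : ∀ R, 0 < ar R)
    (h : SA1Feas ar vI vA pv pc) {R : σ} {v : Fin (ar R) → I} (hv : 0 < vI R v) :
    ∑ t, pc R v t = 1 := by
  set i₀ : Fin (ar R) := ⟨0, har R⟩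
  rw [← Finset.sum_fiberwise univ (fun t => t i₀), ← h.1.2.1 (v i₀)]
  exact Finset.sum_congr rfl fun a _ => (h.1.2.2.1 R v hv i₀ a).symm

lemma SA1Feas.pc_le_one [DecidableEq A] (har : ∀ R, 0 < ar R) (h : SA1Feas ar vI vA pv pc)
    {R : σ} {v : Fin (ar R) → I} (hv : 0 < vI R v) (t : Fin (ar R) → A) : pc R v t ≤ 1 :=
  (h.sum_pc_eq_one har hv) ▸
    Finset.single_le_sum (fun t _ => h.1.1 R v t hv) (Finset.mem_univ t)

lemma bddBelow_saObjective [DecidableEq A] (har : ∀ R, 0 < ar R) (hnn : NNeg ar vI) :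
    BddBelow (saObjective vI vA '' {x | SA1Feas ar vI vA x.1 x.2}) := by
  refine ⟨-∑ R, ∑ v, ∑ t, |vI R v * (vA R t).untopD 0|, ?_⟩
  rintro _ ⟨x, hx, rfl⟩
  simp only [saObjective, ← Finset.sum_neg_distrib]
  refine Finset.sum_le_sum fun R _ => Finset.sum_le_sum fun v _ =>
    Finset.sum_le_sum fun t _ => ?_
  rcases (hnn R v).eq_or_lt with h0 | hpos
  · simp [← h0]
  · have h0 := hx.1.1 R v t hpos
    have h1 := hx.pc_le_one har hpos t
    rcases le_total 0 (vI R v * (vA R t).untopD 0) with hw | hw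
    · rw [abs_of_nonneg hw]; nlinarith
    · rw [abs_of_nonpos hw]; nlinarith

lemma exists_SA1Feas_objVal_le [DecidableEq A] (har : ∀ R, 0 < ar R) (hnn : NNeg ar vI)
    (hfe : ∃ pv pc, SA1Feas ar vI vA pv pc) :
    ∃ pv pc, SA1Feas ar vI vA pv pc ∧ toE (objVal ar vI vA pc) ≤ OptSA1 ar vI vA := by
  obtain ⟨pv₀, pc₀, h₀⟩ := hfe
  obtain ⟨x, hx, hmin⟩ := isPolyhedral_setOf_SA1Feas.exists_isMinOn ⟨(pv₀, pc₀), h₀⟩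
    isLinearMap_saObjective (bddBelow_saObjective har hnn)
  refine ⟨x.1, x.2, hx, le_sInf ?_⟩
  rintro _ ⟨pv, pc, h, rfl⟩
  rw [objVal_eq_saObjective hnn hx, objVal_eq_saObjective hnn h]
  exact toE_mono (WithTop.coe_le_coe.2 (isMinOn_iff.1 hmin (pv, pc) h))

end SheraliAdams

section Samples

variable {σ : Type} [Fintype σ] {ar : σ → ℕ} {I A : Type} [Fintype I] [Fintype A] [DecidableEq A]
  {vI : ∀ R : σ, (Fin (ar R) → I) → ℚ} {vA : ∀ R : σ, (Fin (ar R) → A) → WithTop ℚ} {pv : I → A → ℚ}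
  {pc : ∀ R : σ, (Fin (ar R) → I) → (Fin (ar R) → A) → ℚ}

lemma SA1Feas.nonempty (h : SA1Feas ar vI vA pv pc) (u : I) : Nonempty A :=
  univ_nonempty_iff.1 <| nonempty_of_sum_ne_zero (f := pv u) <| by
    rw [h.1.2.1 u]
    exact one_ne_zero

lemma SA1Feas.exists_constraint_samples (har : ∀ R, 0 < ar R) (h : SA1Feas ar vI vA pv pc) :
    ∃ m, 0 < m ∧ ∃ L : ∀ c : CVert σ ar I, Fin m → Fin (ar c.1) → A,
      ∀ c : CVert σ ar I, 0 < vI c.1 c.2 → ∀ t, (#{ℓ | L c ℓ = t} : ℚ) = m * pc c.1 c.2 t := by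
  set m := ∏ c : CVert σ ar I, ∏ t, (pc c.1 c.2 t).den
  have hden : ∀ (c : CVert σ ar I) t, (pc c.1 c.2 t).den ∣ m := fun c t =>
    (Finset.dvd_prod_of_mem (fun t => (pc c.1 c.2 t).den) (mem_univ t)).trans
      (Finset.dvd_prod_of_mem (fun c : CVert σ ar I => ∏ t, (pc c.1 c.2 t).den) (mem_univ c))
  have hL : ∀ c : CVert σ ar I, ∃ L : Fin m → Fin (ar c.1) → A,
      0 < vI c.1 c.2 → ∀ t, (#{ℓ | L ℓ = t} : ℚ) = m * pc c.1 c.2 t := by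
    intro c
    have := h.nonempty (c.2 ⟨0, har c.1⟩)
    by_cases hc : 0 < vI c.1 c.2
    · obtain ⟨L, hL⟩ := exists_fin_card_filter_eq_mul (pc c.1 c.2) (h.1.1 c.1 c.2 · hc)
        (h.sum_pc_eq_one har hc) (hden c)
      exact ⟨L, fun _ => hL⟩
    · exact ⟨fun _ _ => Classical.arbitrary A, fun h' => absurd h' hc⟩
  choose L hL using hL
  exact ⟨m, Finset.prod_pos fun c _ => Finset.prod_pos fun t _ => (pc c.1 c.2 t).den_pos, L, hL⟩

variable {m : ℕ} {L : ∀ c : CVert σ ar I, Fin m → Fin (ar c.1) → A}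

lemma SA1Feas.card_filter_samples_apply_eq (h : SA1Feas ar vI vA pv pc)
    (hL : ∀ c : CVert σ ar I, 0 < vI c.1 c.2 → ∀ t, (#{ℓ | L c ℓ = t} : ℚ) = m * pc c.1 c.2 t)
    {c : CVert σ ar I} (hc : 0 < vI c.1 c.2) (i : Fin (ar c.1)) (a : A) :
    (#{ℓ | L c ℓ i = a} : ℚ) = m * pv (c.2 i) a := by
  rw [card_filter_comp_eq (L c) (fun t => t i) a, h.1.2.2.1 c.1 c.2 hc i a, Finset.mul_sum]
  push_cast
  exact Finset.sum_congr rfl fun t _ => hL c hc t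

lemma SA1Feas.samples_apply_eq_of_eq (h : SA1Feas ar vI vA pv pc)
    (hL : ∀ c : CVert σ ar I, 0 < vI c.1 c.2 → ∀ t, (#{ℓ | L c ℓ = t} : ℚ) = m * pc c.1 c.2 t)
    {c : CVert σ ar I} (hc : 0 < vI c.1 c.2) (ℓ : Fin m) {i j : Fin (ar c.1)}
    (hij : c.2 i = c.2 j) : L c ℓ i = L c ℓ j := by
  by_contra hne
  exact (pos_of_card_filter_eq_mul (hL c hc) ℓ).ne' (h.2 c.1 c.2 hc _ ⟨i, j, hij, hne⟩)

lemma SA1Feas.exists_samples (har : ∀ R, 0 < ar R) (h : SA1Feas ar vI vA pv pc) :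
    ∃ m, 0 < m ∧ ∃ (g : I → Fin m → A) (Φ : CVert σ ar I → I → Equiv.Perm (Fin m)),
      ∀ c : CVert σ ar I, 0 < vI c.1 c.2 → ∀ t,
        (#{ℓ | (fun i => g (c.2 i) (Φ c (c.2 i) ℓ)) = t} : ℚ) = m * pc c.1 c.2 t := by
  obtain ⟨m, hm, L, hL⟩ := h.exists_constraint_samples har
  have hg : ∀ u, ∃ gu : Fin m → A, ∀ c : CVert σ ar I, 0 < vI c.1 c.2 → ∀ i, c.2 i = u →
      ∀ a, #{ℓ | gu ℓ = a} = #{ℓ | L c ℓ i = a} := by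
    intro u
    by_cases hu : ∃ c : CVert σ ar I, 0 < vI c.1 c.2 ∧ ∃ i, c.2 i = u
    · obtain ⟨c₀, hc₀, i₀, rfl⟩ := hu
      refine ⟨fun ℓ => L c₀ ℓ i₀, fun c hc i hi a => ?_⟩
      have e : (#{ℓ | L c₀ ℓ i₀ = a} : ℚ) = #{ℓ | L c ℓ i = a} := by
        rw [h.card_filter_samples_apply_eq hL hc₀, h.card_filter_samples_apply_eq hL hc, hi]
      exact_mod_cast e
    · have := h.nonempty u
      refine ⟨fun _ => Classical.arbitrary A, fun c hc i hi => absurd ⟨c, hc, i, hi⟩ hu⟩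
  choose g hg using hg
  have hΦ : ∀ c : CVert σ ar I, ∃ Φc : I → Equiv.Perm (Fin m),
      0 < vI c.1 c.2 → ∀ ℓ i, g (c.2 i) (Φc (c.2 i) ℓ) = L c ℓ i := by
    intro c
    by_cases hc : 0 < vI c.1 c.2
    · obtain ⟨Φc, hΦc⟩ := exists_perms_comp_eq c.2 (L c) g (fun i a => hg _ c hc i rfl a)
        fun ℓ i j => h.samples_apply_eq_of_eq hL hc ℓ
      exact ⟨Φc, fun _ => hΦc⟩
    · exact ⟨1, fun h' => absurd h' hc⟩
  choose Φ hΦ using hΦ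
  refine ⟨m, hm, g, Φ, fun c hc t => ?_⟩
  simp_rw [hΦ c hc]
  exact hL c hc t

end Samples

/-! ### Covering maps preserve iterated degrees -/

section Covering

variable {σ : Type} [Fintype σ] {ar : σ → ℕ} {I J : Type} [Fintype I] [DecidableEq I]
  [Fintype J] [DecidableEq J] {vI : ∀ R : σ, (Fin (ar R) → I) → ℚ}
  {vJ : ∀ R : σ, (Fin (ar R) → J) → ℚ} {π : J → I}

def cvMap (π : J → I) (c : CVert σ ar J) : CVert σ ar I := ⟨c.1, fun i => π (c.2 i)⟩

/-- `π` is a covering map of the graphs `G(J) → G(I)` preserving constraint weights. -/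
structure IsCovering (vJ : ∀ R : σ, (Fin (ar R) → J) → ℚ) (vI : ∀ R : σ, (Fin (ar R) → I) → ℚ)
    (π : J → I) : Prop where
  apply_eq : ∀ c : CVert σ ar J, 0 < vJ c.1 c.2 → vJ c.1 c.2 = vI c.1 (cvMap π c).2
  eq_of_map_eq : ∀ c : CVert σ ar J, 0 < vJ c.1 c.2 → ∀ i j, π (c.2 i) = π (c.2 j) →
    c.2 i = c.2 j
  map_star : ∀ u, (univ.filter fun c : CVert σ ar J => 0 < vJ c.1 c.2 ∧ ∃ i, c.2 i = u).val.map
    (cvMap π) = (univ.filter fun c : CVert σ ar I => 0 < vI c.1 c.2 ∧ ∃ i, c.2 i = π u).val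

namespace IsCovering

lemma edgeLab_cvMap (h : IsCovering vJ vI π) {c : CVert σ ar J} (hc : 0 < vJ c.1 c.2) {u : J}
    (hu : ∃ i, c.2 i = u) : edgeLab (π u) (cvMap π c) = edgeLab u c := by
  obtain ⟨i₀, rfl⟩ := hu
  unfold edgeLab cvMap
  congr 1
  ext i
  simp only [mem_filter, mem_univ, true_and]
  exact ⟨h.eq_of_map_eq c hc i i₀, congrArg π⟩

lemma map_scope (h : IsCovering vJ vI π) {c : CVert σ ar J} (hc : 0 < vJ c.1 c.2) :
    (univ.filter fun u : J => ∃ i, c.2 i = u).val.map π =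
      (univ.filter fun x : I => ∃ i, (cvMap π c).2 i = x).val := by
  rw [← Finset.image_val_of_injOn]
  · refine congrArg Finset.val (Finset.ext fun x => ?_)
    simp only [mem_image, mem_filter, mem_univ, true_and]
    exact ⟨fun ⟨_, ⟨i, hi⟩, hx⟩ => ⟨i, by rw [← hx, ← hi]; rfl⟩,
      fun ⟨i, hi⟩ => ⟨_, ⟨i, rfl⟩, hi⟩⟩
  · intro u hu u' hu' huu'
    obtain ⟨i, rfl⟩ := (mem_filter.1 hu).2
    obtain ⟨j, rfl⟩ := (mem_filter.1 hu').2
    exact h.eq_of_map_eq c hc i j huu'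

lemma degV_eq (h : IsCovering vJ vI π) (k : ℕ) :
    (∀ u, degV ar vJ k (.inl u) = degV ar vI k (.inl (π u))) ∧
      ∀ c, 0 < vJ c.1 c.2 → degV ar vJ k (.inr c) = degV ar vI k (.inr (cvMap π c)) := by
  induction k with
  | zero => exact ⟨fun u => rfl, fun c hc => by simp only [degV, h.apply_eq c hc]; rfl⟩
  | succ k ih =>
    refine ⟨fun u => ?_, fun c hc => ?_⟩
    · rw [degV, degV, ← h.map_star u, Multiset.map_map]
      refine Multiset.map_congr rfl fun c hc => ?_
      obtain ⟨hpos, hu⟩ := (mem_filter.1 (mem_def.2 hc)).2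
      simp only [Function.comp_apply, h.edgeLab_cvMap hpos hu, ih.2 c hpos]
    · rw [degV, degV, ← h.map_scope hc, Multiset.map_map]
      refine Multiset.map_congr rfl fun u hu => ?_
      simp only [Function.comp_apply, h.edgeLab_cvMap hc (mem_filter.1 (mem_def.2 hu)).2,
        ih.1 u]

lemma degSeq_eq (h : IsCovering vJ vI π) {m : ℕ} (hvar : univ.val.map π = m • univ.val)
    (hcon : (univ.filter fun c : CVert σ ar J => 0 < vJ c.1 c.2).val.map (cvMap π) =
      m • (univ.filter fun c : CVert σ ar I => 0 < vI c.1 c.2).val) :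
    degSeq ar vJ = m • degSeq ar vI := by
  unfold degSeq
  rw [nsmul_add, ← Multiset.map_nsmul, ← Multiset.map_nsmul, ← hvar, ← hcon, Multiset.map_map,
    Multiset.map_map]
  congr 1
  · exact Multiset.map_congr rfl fun u _ => funext fun k => (h.degV_eq k).1 u
  · exact Multiset.map_congr rfl fun c hc => funext fun k =>
      (h.degV_eq k).2 c (mem_filter.1 (mem_def.2 hc)).2

end IsCovering

end Covering

/-! ### Twisted covers -/

section TwistedCover

variable {σ : Type} {ar : σ → ℕ} {I J : Type} {m : ℕ}

def liftScope (e : I × Fin m ≃ J) (Φ : CVert σ ar I → I → Equiv.Perm (Fin m))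
    (c : CVert σ ar I) (ℓ : Fin m) : Fin (ar c.1) → J :=
  fun i => e (c.2 i, Φ c (c.2 i) ℓ)

/-- The `m`-fold cover of `I`, with weights divided by `m`, in which the `ℓ`-th copy of a
constraint `c` meets copy `Φ c u ℓ` of each of its variables `u`. -/
def twistedCover [Fintype I] [DecidableEq J] (e : I × Fin m ≃ J)
    (Φ : CVert σ ar I → I → Equiv.Perm (Fin m)) (vI : ∀ R : σ, (Fin (ar R) → I) → ℚ) :
    ∀ R : σ, (Fin (ar R) → J) → ℚ :=
  fun R t => ∑ v, ∑ ℓ, if liftScope e Φ ⟨R, v⟩ ℓ = t then vI R v / m else 0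

def layerDist [Fintype I] [DecidableEq J] (e : I × Fin m ≃ J) (f : I → J) : ℚ :=
  ∑ j, if f = (fun u => e (u, j)) then (m : ℚ)⁻¹ else 0

variable {e : I × Fin m ≃ J} {Φ : CVert σ ar I → I → Equiv.Perm (Fin m)}
  {vI : ∀ R : σ, (Fin (ar R) → I) → ℚ}

lemma cvMap_liftScope (c : CVert σ ar I) (ℓ : Fin m) :
    cvMap (fun y => (e.symm y).1) ⟨c.1, liftScope e Φ c ℓ⟩ = c := by
  simp [cvMap, liftScope]

lemma liftScope_inj (har : ∀ R, 0 < ar R) {R : σ} {v v' : Fin (ar R) → I} {ℓ ℓ' : Fin m} :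
    liftScope e Φ ⟨R, v⟩ ℓ = liftScope e Φ ⟨R, v'⟩ ℓ' ↔ v = v' ∧ ℓ = ℓ' := by
  refine ⟨fun h => ?_, by rintro ⟨rfl, rfl⟩; rfl⟩
  have hv : v = v' := funext fun i => by
    simpa [liftScope] using congrArg (fun t => (e.symm (t i)).1) h
  subst hv
  refine ⟨rfl, (Φ ⟨R, v⟩ (v ⟨0, har R⟩)).injective ?_⟩
  simpa [liftScope] using congrArg (fun t => (e.symm (t ⟨0, har R⟩)).2) h

lemma twistedCover_nonneg [Fintype I] [DecidableEq J] (hnn : NNeg ar vI) :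
    NNeg ar (twistedCover e Φ vI) := fun R t =>
  Finset.sum_nonneg fun v _ => Finset.sum_nonneg fun ℓ _ => by
    split_ifs
    · exact div_nonneg (hnn R v) (Nat.cast_nonneg m)
    · exact le_rfl

lemma twistedCover_liftScope [Fintype I] [DecidableEq I] [DecidableEq J] (har : ∀ R, 0 < ar R)
    (R : σ) (v : Fin (ar R) → I) (ℓ : Fin m) :
    twistedCover e Φ vI R (liftScope e Φ ⟨R, v⟩ ℓ) = vI R v / m := by
  simp [twistedCover, liftScope_inj har, ite_and]

lemma exists_liftScope_of_twistedCover_ne_zero [Fintype I] [DecidableEq J] {R : σ}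
    {t : Fin (ar R) → J} (h : twistedCover e Φ vI R t ≠ 0) : ∃ v ℓ, liftScope e Φ ⟨R, v⟩ ℓ = t := by
  by_contra! hne
  exact h (Finset.sum_eq_zero fun v _ => Finset.sum_eq_zero fun ℓ _ => if_neg (hne v ℓ))

lemma twistedCover_pos_iff [Fintype I] [DecidableEq I] [DecidableEq J] (hm : 0 < m)
    (har : ∀ R, 0 < ar R) {R : σ} {t : Fin (ar R) → J} :
    0 < twistedCover e Φ vI R t ↔ ∃ v ℓ, 0 < vI R v ∧ liftScope e Φ ⟨R, v⟩ ℓ = t := by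
  have hm' : (0 : ℚ) < m := by exact_mod_cast hm
  constructor
  · intro h
    obtain ⟨v, ℓ, rfl⟩ := exists_liftScope_of_twistedCover_ne_zero h.ne'
    rw [twistedCover_liftScope har] at h
    exact ⟨v, ℓ, (div_pos_iff_of_pos_right hm').1 h, rfl⟩
  · rintro ⟨v, ℓ, hv, rfl⟩
    rw [twistedCover_liftScope har]
    exact div_pos hv hm'

lemma sum_twistedCover_mul [Fintype I] [Fintype J] [DecidableEq J] (R : σ)
    (F : (Fin (ar R) → J) → ℚ) :
    ∑ t, twistedCover e Φ vI R t * F t = ∑ v, ∑ ℓ, vI R v / m * F (liftScope e Φ ⟨R, v⟩ ℓ) := by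
  simp only [twistedCover, Finset.sum_mul, ite_mul, zero_mul]
  rw [Finset.sum_comm]
  refine Finset.sum_congr rfl fun v _ => ?_
  rw [Finset.sum_comm]
  simp

lemma isDualFracHom_layerDist [Fintype σ] [Fintype I] [DecidableEq I] [Fintype J]
    [DecidableEq J] (hm : 0 < m) :
    IsDualFracHom ar vI (twistedCover e (fun _ _ => 1) vI) (layerDist e) := by
  refine ⟨fun f => Finset.sum_nonneg fun j _ => by positivity, ?_, fun R t => le_of_eq ?_⟩
  · simp only [layerDist]
    rw [Finset.sum_comm]
    simp [Finset.sum_ite_eq']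
    exact mul_inv_cancel₀ (by exact_mod_cast hm.ne')
  · simp only [layerDist, twistedCover, Finset.sum_mul, ite_mul, zero_mul]
    rw [Finset.sum_comm]
    simp only [Finset.sum_ite_eq', Finset.mem_univ, if_true, Finset.sum_filter, Finset.mul_sum]
    conv_rhs => rw [Finset.sum_comm]
    simp only [mul_ite, mul_zero, div_eq_inv_mul]
    rfl

lemma isCovering_twistedCover [Fintype σ] [Fintype I] [DecidableEq I] [Fintype J]
    [DecidableEq J] (hm : 0 < m) (har : ∀ R, 0 < ar R) :
    IsCovering (twistedCover e Φ vI) (fun R v => vI R v / m) (fun y => (e.symm y).1) where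
  apply_eq := by
    rintro ⟨R, t⟩ h
    dsimp only at h ⊢
    obtain ⟨v, ℓ, -, rfl⟩ := (twistedCover_pos_iff hm har).1 h
    rw [twistedCover_liftScope har]
    simp [cvMap, liftScope]
  eq_of_map_eq := by
    rintro ⟨R, t⟩ h i j hij
    dsimp only at h hij i j ⊢
    obtain ⟨v, ℓ, -, rfl⟩ := (twistedCover_pos_iff hm har).1 h
    simp only [liftScope, Equiv.symm_apply_apply] at hij ⊢
    rw [hij]
  map_star := by
    intro u
    set x := (e.symm u).1
    set G : CVert σ ar I → CVert σ ar J :=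
      fun c => ⟨c.1, liftScope e Φ c ((Φ c x).symm (e.symm u).2)⟩
    have hG : Function.Injective G := fun c c' h => by
      simpa only [G, cvMap_liftScope] using congrArg (cvMap fun y => (e.symm y).1) h
    have hm' : (0 : ℚ) < m := by exact_mod_cast hm
    have hstar : (univ.filter fun c : CVert σ ar J =>
          0 < twistedCover e Φ vI c.1 c.2 ∧ ∃ i, c.2 i = u) =
        (univ.filter fun c : CVert σ ar I => 0 < vI c.1 c.2 / m ∧ ∃ i, c.2 i = x).map ⟨G, hG⟩ := by
      ext ⟨R, t⟩
      simp only [mem_filter, mem_univ, true_and, mem_map, Function.Embedding.coeFn_mk,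
        div_pos_iff_of_pos_right hm', twistedCover_pos_iff hm har]
      constructor
      · rintro ⟨⟨v, ℓ, hv, rfl⟩, i, rfl⟩
        refine ⟨⟨R, v⟩, ⟨hv, i, by simp [x, liftScope]⟩, ?_⟩
        simp [G, x, liftScope]
      · rintro ⟨⟨R', v⟩, ⟨hv, i, hi⟩, hGc⟩
        cases hGc
        dsimp only at hv hi
        refine ⟨⟨v, _, hv, rfl⟩, i, ?_⟩
        simp [liftScope, hi, x]
    rw [hstar, map_val, Multiset.map_map]
    exact (Multiset.map_congr rfl fun c _ => cvMap_liftScope c _).trans (Multiset.map_id _)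

lemma map_fst_symm_univ_val [Fintype I] [Fintype J] (e : I × Fin m ≃ J) :
    (univ : Finset J).val.map (fun y => (e.symm y).1) = m • (univ : Finset I).val := by
  rw [show (fun y => (e.symm y).1) = Prod.fst ∘ e.symm from rfl, ← Multiset.map_map,
    Multiset.map_univ_val_equiv, ← univ_product_univ,
    product_val, Multiset.map_fst_product, card_val, card_univ, Fintype.card_fin]

lemma map_cvMap_filter_twistedCover [Fintype σ] [Fintype I] [DecidableEq I] [Fintype J]
    [DecidableEq J] (hm : 0 < m) (har : ∀ R, 0 < ar R) :
    (univ.filter fun c : CVert σ ar J => 0 < twistedCover e Φ vI c.1 c.2).val.map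
        (cvMap fun y => (e.symm y).1) =
      m • (univ.filter fun c : CVert σ ar I => 0 < vI c.1 c.2 / m).val := by
  set G : CVert σ ar I × Fin m → CVert σ ar J := fun p => ⟨p.1.1, liftScope e Φ p.1 p.2⟩
  have hG : Function.Injective G := by
    rintro ⟨⟨R, v⟩, ℓ⟩ ⟨c', ℓ'⟩ h
    obtain rfl : (⟨R, v⟩ : CVert σ ar I) = c' := (cvMap_liftScope (Φ := Φ) _ ℓ).symm.trans
      ((congrArg (cvMap fun y => (e.symm y).1) h).trans (cvMap_liftScope c' ℓ'))
    obtain ⟨-, rfl⟩ := (liftScope_inj har).1 (eq_of_heq (Sigma.mk.inj_iff.1 h).2)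
    rfl
  have hm' : (0 : ℚ) < m := by exact_mod_cast hm
  have hpos : (univ.filter fun c : CVert σ ar J => 0 < twistedCover e Φ vI c.1 c.2) =
      ((univ.filter fun c : CVert σ ar I => 0 < vI c.1 c.2 / m) ×ˢ univ).map ⟨G, hG⟩ := by
    ext ⟨R, t⟩
    simp only [mem_filter, mem_univ, true_and, mem_map, mem_product, and_true,
      Function.Embedding.coeFn_mk, div_pos_iff_of_pos_right hm', twistedCover_pos_iff hm har]
    constructor
    · rintro ⟨v, ℓ, hv, rfl⟩
      exact ⟨(⟨R, v⟩, ℓ), hv, rfl⟩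
    · rintro ⟨⟨⟨R', v⟩, ℓ⟩, hv, hGc⟩
      cases hGc
      exact ⟨v, ℓ, hv, rfl⟩
  rw [hpos, map_val, Multiset.map_map, product_val]
  refine (Multiset.map_congr rfl fun p _ => cvMap_liftScope p.1 p.2).trans ?_
  rw [Multiset.map_fst_product, card_val, card_univ, Fintype.card_fin]

lemma degSeq_twistedCover [Fintype σ] [Fintype I] [DecidableEq I] [Fintype J]
    [DecidableEq J] (hm : 0 < m) (har : ∀ R, 0 < ar R) :
    degSeq ar (twistedCover e Φ vI) = m • degSeq ar (fun R v => vI R v / m) :=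
  (isCovering_twistedCover hm har).degSeq_eq (map_fst_symm_univ_val e)
    (map_cvMap_filter_twistedCover hm har)

end TwistedCover

section Value

lemma val_eq_coe {σ : Type} [Fintype σ] {ar : σ → ℕ} {J A : Type} [Fintype J]
    {vY : ∀ R : σ, (Fin (ar R) → J) → ℚ} {vA : ∀ R : σ, (Fin (ar R) → A) → WithTop ℚ}
    {h : J → A} (hfin : ∀ R t, vA R (fun i => h (t i)) = ⊤ → vY R t = 0) :
    Val ar vY vA h = ((∑ R, ∑ t, vY R t * (vA R fun i => h (t i)).untopD 0 : ℚ) : WithTop ℚ) := by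
  simp only [Val, WithTop.coe_sum]
  exact Finset.sum_congr rfl fun R _ => Finset.sum_congr rfl fun t _ =>
    WithTop.coe_mul_eq_coe_mul_untopD (hfin R t)

variable {σ : Type} [Fintype σ] {ar : σ → ℕ} {I A J : Type} [Fintype I] [DecidableEq I]
  [Fintype A] [DecidableEq A] [Fintype J] [DecidableEq J] {m : ℕ}
  {vI : ∀ R : σ, (Fin (ar R) → I) → ℚ} {vA : ∀ R : σ, (Fin (ar R) → A) → WithTop ℚ}
  {pv : I → A → ℚ} {pc : ∀ R : σ, (Fin (ar R) → I) → (Fin (ar R) → A) → ℚ}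
  {e : I × Fin m ≃ J} {Φ : CVert σ ar I → I → Equiv.Perm (Fin m)}

lemma val_twistedCover (hm : 0 < m) (har : ∀ R, 0 < ar R) (hnn : NNeg ar vI)
    (h : SA1Feas ar vI vA pv pc) {g : I → Fin m → A}
    (hcount : ∀ c : CVert σ ar I, 0 < vI c.1 c.2 → ∀ t,
      (#{ℓ | (fun i => g (c.2 i) (Φ c (c.2 i) ℓ)) = t} : ℚ) = m * pc c.1 c.2 t) :
    Val ar (twistedCover e Φ vI) vA (fun y => g (e.symm y).1 (e.symm y).2) =
      objVal ar vI vA pc := by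
  have hcomp : ∀ R (v : Fin (ar R) → I) ℓ,
      (fun i => g (e.symm (liftScope e Φ ⟨R, v⟩ ℓ i)).1 (e.symm (liftScope e Φ ⟨R, v⟩ ℓ i)).2) =
        fun i => g (v i) (Φ ⟨R, v⟩ (v i) ℓ) := fun R v ℓ => by simp [liftScope]
  have hfin : ∀ R t, vA R (fun i => g (e.symm (t i)).1 (e.symm (t i)).2) = ⊤ →
      twistedCover e Φ vI R t = 0 := by
    intro R t htop
    by_contra hne
    obtain ⟨v, ℓ, rfl⟩ := exists_liftScope_of_twistedCover_ne_zero hne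
    rw [twistedCover_liftScope har] at hne
    have hpos : 0 < vI R v := (hnn R v).lt_of_ne fun h0 => hne (by rw [← h0, zero_div])
    rw [hcomp] at htop
    exact (pos_of_card_filter_eq_mul (hcount ⟨R, v⟩ hpos) ℓ).ne' (h.1.2.2.2 R v hpos _ htop)
  rw [val_eq_coe hfin, objVal_eq_saObjective hnn h, saObjective, WithTop.coe_inj]
  refine Finset.sum_congr rfl fun R _ => ?_
  rw [sum_twistedCover_mul]
  refine Finset.sum_congr rfl fun v _ => ?_
  rcases (hnn R v).eq_or_lt with h0 | hpos
  · simp [← h0]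
  · rw [← Finset.mul_sum, Finset.sum_congr rfl fun ℓ _ => by rw [hcomp],
      sum_comp_eq_sum_card_mul (fun ℓ i => g (v i) (Φ ⟨R, v⟩ (v i) ℓ))
        fun t => (vA R t).untopD 0, Finset.mul_sum]
    refine Finset.sum_congr rfl fun t _ => ?_
    have hm' : (m : ℚ) ≠ 0 := by exact_mod_cast hm.ne'
    rw [hcount ⟨R, v⟩ hpos]
    field_simp

end Value

lemma exists_twistedCover_opt_le {σ : Type} [Fintype σ] {ar : σ → ℕ} {I A : Type} [Fintype I]
    [DecidableEq I] [Fintype A] [DecidableEq A] {vI : ∀ R : σ, (Fin (ar R) → I) → ℚ}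
    (har : ∀ R, 0 < ar R) (hnn : NNeg ar vI) (vA : ∀ R : σ, (Fin (ar R) → A) → WithTop ℚ) :
    ∃ m, 0 < m ∧ ∃ Φ : CVert σ ar I → I → Equiv.Perm (Fin m),
      toE (Opt ar (twistedCover (Fintype.equivFin (I × Fin m)) Φ vI) vA) ≤
        OptSA1 ar vI vA := by
  by_cases hfe : ∃ pv pc, SA1Feas ar vI vA pv pc
  · obtain ⟨pv, pc, h, hopt⟩ := exists_SA1Feas_objVal_le har hnn hfe
    obtain ⟨m, hm, g, Φ, hcount⟩ := h.exists_samples har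
    refine ⟨m, hm, Φ, le_trans (toE_mono ?_) hopt⟩
    rw [← val_twistedCover (e := Fintype.equivFin (I × Fin m)) hm har hnn h hcount]
    exact Finset.inf_le (Finset.mem_univ _)
  · refine ⟨1, one_pos, fun _ _ => 1, le_sInf ?_⟩
    rintro _ ⟨pv, pc, h, rfl⟩
    exact absurd ⟨pv, pc, h⟩ hfe

theorem stmt_6 {σ : Type} [Fintype σ] (ar : σ → ℕ) (har : ∀ R, 0 < ar R)
    {I : Type} [Fintype I] [DecidableEq I]
    (vI : ∀ R : σ, (Fin (ar R) → I) → ℚ) (hnn : NNeg ar vI)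
    {A : Type} [Fintype A] [DecidableEq A]
    (vA : ∀ R : σ, (Fin (ar R) → A) → WithTop ℚ) :
    ∃ (n₁ n₂ : ℕ)
      (vY₁ : ∀ R : σ, (Fin (ar R) → Fin n₁) → ℚ)
      (vY₂ : ∀ R : σ, (Fin (ar R) → Fin n₂) → ℚ),
      NNeg ar vY₁ ∧ NNeg ar vY₂ ∧
      (∃ η : (I → Fin n₁) → ℚ, IsDualFracHom ar vI vY₁ η) ∧
      degSeq ar vY₁ = degSeq ar vY₂ ∧
      toE (Opt ar vY₂ vA) ≤ OptSA1 ar vI vA := by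
  obtain ⟨m, hm, Φ, hopt⟩ := exists_twistedCover_opt_le har hnn vA
  set e := Fintype.equivFin (I × Fin m)
  exact ⟨_, _, twistedCover e (fun _ _ => 1) vI, twistedCover e Φ vI, twistedCover_nonneg hnn,
    twistedCover_nonneg hnn, ⟨layerDist e, isDualFracHom_layerDist hm⟩,
    (degSeq_twistedCover hm har).trans (degSeq_twistedCover hm har).symm, hopt⟩

end PVCSP
end
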